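/- arXiv:2103.04378 — 7 statements merged into one kernel-verified Lean document; each statement's English description precedes it below -/
import Mathlib

section
/- Let K = ℚ(q, s₁, …, s_N) and Λ^{B_N} = K[[y₁, …, y_N]] where y_i represents x_{i+1}/x_i for 1 ≤ i ≤ N−1 and y_N represents 1/x_N. Then there exists a unique formal power series f ∈ Λ^{B_N} whose constant term equals 1 and which satisfies the eigenvalue equation D^{B_N Toda}(x|s|q) f = Σ_{i=1}^N (s_i + s_i^{−1}) f. -/
open scoped BigOperators

noncomputable section

attribute [local instance] Classical.propDecidable

namespace QToda

/-- The base field `ℚ(q, s₁, …, s_N)`: the fraction field of the polynomial ring in `N + 1`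
variables over `ℚ`, where variable `0` is `q` and variable `i` is `sᵢ` for `1 ≤ i ≤ N`. -/
abbrev K (N : ℕ) : Type := FractionRing (MvPolynomial (Fin (N + 1)) ℚ)

/-- The indeterminate `q` of `ℚ(q, s₁, …, s_N)`. -/
def qP (N : ℕ) : K N :=
  algebraMap (MvPolynomial (Fin (N + 1)) ℚ) (K N) (MvPolynomial.X ⟨0, Nat.succ_pos N⟩)

/-- The indeterminate `sᵢ` of `ℚ(q, s₁, …, s_N)` (1-based; meaningful for `1 ≤ i ≤ N`). -/
def sP (N : ℕ) (i : ℕ) : K N :=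
  if h : i ≤ N then
    algebraMap (MvPolynomial (Fin (N + 1)) ℚ) (K N) (MvPolynomial.X ⟨i, Nat.lt_succ_of_le h⟩)
  else 1

variable {F : Type*} [Field F]

/-- The q-Pochhammer symbol `(a;q)_n = ∏_{k=1}^n (1 - q^(k-1) a)`. -/
def qPoch (q a : F) (n : ℕ) : F := ∏ k ∈ Finset.range n, (1 - q ^ k * a)

/-- The pairs `(i, j)` with `a ≤ i < j ≤ b`. -/
def pairsLT (a b : ℕ) : Finset (ℕ × ℕ) :=
  (Finset.Icc a b ×ˢ Finset.Icc a b).filter fun p => p.1 < p.2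

/-- `θ` is (the extension by zero of) a strictly upper triangular `N × N` matrix of
nonnegative integers, 1-based indexing. -/
def UT (N : ℕ) (θ : ℕ → ℕ → ℕ) : Prop :=
  ∀ i j, ¬(1 ≤ i ∧ i < j ∧ j ≤ N) → θ i j = 0

/-- `θ` is (the extension by zero of) a vector `(θ₁, …, θ_N) ∈ ℤ_{≥0}^N`, 1-based indexing. -/
def Vec (N : ℕ) (θ : ℕ → ℕ) : Prop := ∀ i, ¬(1 ≤ i ∧ i ≤ N) → θ i = 0

/-- The coefficients `c^{Toda}_N(θ; s; q)` of the `A_{N-1}` q-Toda function. -/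
def cToda (q : F) (s : ℕ → F) (N : ℕ) (θ : ℕ → ℕ → ℕ) : F :=
  ∏ k ∈ Finset.Icc 2 N,
    ∏ p ∈ (Finset.Icc 1 (k - 1) ×ˢ Finset.Icc 1 (k - 1)).filter (fun p => p.1 ≤ p.2),
      (1 / qPoch q
          (q ^ (∑ a ∈ Finset.Icc (k + 1) N, ((θ p.1 a : ℤ) - (θ (p.2 + 1) a : ℤ)))
            * q * s (p.2 + 1) / s p.1) (θ p.1 k))
      * (q ^ (θ p.1 k)
          / qPoch q
            (q ^ ((θ p.2 k : ℤ) - (θ p.1 k : ℤ)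
                - ∑ a ∈ Finset.Icc (k + 1) N, ((θ p.1 a : ℤ) - (θ p.2 a : ℤ)))
              * q * s p.1 / s p.2) (θ p.1 k))

/-- The asymptotically free `A_{N-1}` q-Toda function
`f^{A_{N-1} Toda}(x|s|q) = Σ_θ c^{Toda}_N(θ;s;q) ∏_{i<j} (x_j/x_i)^{θ_{i,j}}`,
regarded as a formal power series in the `M` variables `y₁, …, y_M` (where `y_m = x_{m+1}/x_m`,
so that `x_j/x_i = y_i ⋯ y_{j-1}`); here `M = N - 1`, or `M = N` for the natural embedding
`K[[y₁,…,y_{N-1}]] ⊆ K[[y₁,…,y_N]]`.  The coefficient of `y^d` is the (finite) sum of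
`c^{Toda}_N(θ;s;q)` over the strictly upper triangular `θ` with
`Σ_{i ≤ m < j} θ_{i,j} = d_m` for all `m`. -/
def fA (q : F) (s : ℕ → F) (N M : ℕ) : MvPowerSeries (Fin M) F :=
  fun d => ∑ᶠ θ : ℕ → ℕ → ℕ,
    if UT N θ ∧ ∀ m : Fin M,
        d m = ∑ p ∈ pairsLT 1 N,
          (if p.1 ≤ (m : ℕ) + 1 ∧ (m : ℕ) + 1 < p.2 then θ p.1 p.2 else 0)
    then cToda q s N θ else 0

/-- The monomial `∏ y_m ^ e(m)` (with coefficient 1). -/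
def mono {M : ℕ} (e : Fin M → ℕ) : MvPowerSeries (Fin M) F :=
  MvPowerSeries.monomial (Finsupp.equivFunOnFinite.symm e) 1

/-- The generator `y_ℓ` (1-based label `ℓ`, i.e. the variable of index `ℓ - 1`). -/
def Y {M : ℕ} (ℓ : ℕ) : MvPowerSeries (Fin M) F :=
  mono fun m => if (m : ℕ) + 1 = ℓ then 1 else 0

/-- The `ε`-th power of the shift operator `T_{q,x_i}`, i.e. the continuous algebra
automorphism determined by `y_{i-1} ↦ q^ε y_{i-1}` (when `i ≥ 2`) and `y_i ↦ q^{-ε} y_i`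
(when `y_i` is among the variables), fixing all other generators.  On the coefficient at a
monomial `y^d`, it multiplies by `q^{ε (d_{i-1} - d_i)}`. -/
def Tq (q : F) {M : ℕ} (i : ℕ) (ε : ℤ) (f : MvPowerSeries (Fin M) F) :
    MvPowerSeries (Fin M) F :=
  fun d => q ^ (ε * ∑ j : Fin M,
      (((if (j : ℕ) + 2 = i then 1 else 0) - (if (j : ℕ) + 1 = i then 1 else 0)) * (d j : ℤ)))
    * f d

/-- The `B_N` q-Toda operator
`D^{B_N} = Σ_{i=1}^{N-1} s_i (1 - x_{i+1}/x_i) T_{q,x_i} + s_N (1 - 1/x_N) T_{q,x_N}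
 + s₁⁻¹ T_{q,x₁}⁻¹ + Σ_{i=2}^N s_i⁻¹ (1 - x_i/x_{i-1}) T_{q,x_i}⁻¹`,
acting on `K[[y₁, …, y_N]]` with `y_i = x_{i+1}/x_i` (`i ≤ N-1`), `y_N = 1/x_N`. -/
def DB (q : F) (s : ℕ → F) (N : ℕ) (f : MvPowerSeries (Fin N) F) : MvPowerSeries (Fin N) F :=
  (∑ i ∈ Finset.Icc 1 (N - 1), s i • ((1 - Y i) * Tq q i 1 f))
    + s N • ((1 - Y N) * Tq q N 1 f)
    + (s 1)⁻¹ • Tq q 1 (-1) f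
    + ∑ i ∈ Finset.Icc 2 N, (s i)⁻¹ • ((1 - Y (i - 1)) * Tq q i (-1) f)

/-- The `A_{N-1}` q-Toda operator
`D^{A_{N-1}} = Σ_{i=1}^{N-1} s_i (1 - x_{i+1}/x_i) T_{q,x_i} + s_N T_{q,x_N}`,
acting on `K[[y₁, …, y_{N-1}]]`. -/
def DA (q : F) (s : ℕ → F) (N : ℕ) (f : MvPowerSeries (Fin (N - 1)) F) :
    MvPowerSeries (Fin (N - 1)) F :=
  (∑ i ∈ Finset.Icc 1 (N - 1), s i • ((1 - Y i) * Tq q i 1 f)) + s N • Tq q N 1 f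

/-- The branching coefficients `e^{B_N/A_{N-1}}_θ(s|q)`. -/
def eBA (q : F) (s : ℕ → F) (N : ℕ) (θ : ℕ → ℕ) : F :=
  (∏ k ∈ Finset.Icc 1 N,
      q ^ ((N - k + 1) * θ k) / (qPoch q q (θ k) * qPoch q (q / s k ^ 2) (θ k)))
  * ∏ p ∈ pairsLT 1 N,
      (1 / (qPoch q (q * s p.2 / s p.1) (θ p.1)
          * qPoch q (q ^ ((θ p.2 : ℤ) - (θ p.1 : ℤ)) * q * s p.1 / s p.2) (θ p.1)))
      * (qPoch q (q / (s p.1 * s p.2)) (θ p.1 + θ p.2)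
          / (qPoch q (q / (s p.1 * s p.2)) (θ p.1)
            * qPoch q (q / (s p.1 * s p.2)) (θ p.2)))

/-- The coefficients `d^{Toda}_N(θ; s; q)`. -/
def dToda (q : F) (s : ℕ → F) (N : ℕ) (θ : ℕ → ℕ) : F :=
  (∏ i ∈ Finset.Icc 1 (N - 1),
      (1 / qPoch q q (θ i)) * (q ^ θ i / qPoch q (q * s N / s i) (θ i)))
  * ∏ p ∈ pairsLT 1 (N - 1),
      (1 / qPoch q (q * s p.2 / s p.1) (θ p.1))
      * (q ^ θ p.1
          / qPoch q (q ^ ((θ p.2 : ℤ) - (θ p.1 : ℤ) + 1) * s p.1 / s p.2) (θ p.1))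

/-- The shifted parameters `(q^{-θ₁} s₁, …, q^{-θ_N} s_N)`. -/
def shiftAll (q : F) (s : ℕ → F) (θ : ℕ → ℕ) : ℕ → F := fun i => q ^ (-(θ i : ℤ)) * s i

/-- The shifted parameters `q^{-ε_k}·s = (s₁, …, q⁻¹ s_k, …, s_N)`. -/
def shiftOne (q : F) (s : ℕ → F) (k : ℕ) : ℕ → F := fun i => if i = k then q⁻¹ * s i else s i

/-- The right-hand side of the branching formula:
`Σ_{θ ∈ ℤ_{≥0}^N} e^{B_N/A_{N-1}}_θ(s|q) ∏_i x_i^{-θ_i}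
 · f^{A_{N-1} Toda}(x | q^{-θ₁}s₁, …, q^{-θ_N}s_N | q)`,
where `x_i⁻¹ = y_i y_{i+1} ⋯ y_N`, so that `∏_i x_i^{-θ_i}` is the monomial whose exponent at
`y_ℓ` is `θ₁ + ⋯ + θ_ℓ`. -/
def branchRHS (q : F) (s : ℕ → F) (N : ℕ) : MvPowerSeries (Fin N) F :=
  fun d => ∑ᶠ θ : ℕ → ℕ,
    if Vec N θ then
      eBA q s N θ * MvPowerSeries.coeff d
        (mono (fun m => ∑ i ∈ Finset.Icc 1 ((m : ℕ) + 1), θ i)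
          * fA q (shiftAll q s θ) N N)
    else 0

end QToda

/-!
On the coefficient of `y^d`, the operator `D^{B_N}` acts as multiplication by
`E(d) = Σᵢ (sᵢ q^{d_{i-1} - dᵢ} + sᵢ⁻¹ q^{dᵢ - d_{i-1}})`, plus terms involving only the
coefficients at the strictly smaller exponents `d - e_ℓ` (those carrying a factor `y_ℓ`).
The eigenvalue equation for `E(0) = Σᵢ (sᵢ + sᵢ⁻¹)` is therefore a triangular recursion that
determines every coefficient from `f₀ = 1`, as soon as `E(d) ≠ E(0)` for `d ≠ 0`.

For `d ≠ 0` some `wᵢ = d_{i-1} - dᵢ` is nonzero (take `i - 1` minimal in the support of `d`).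
Multiplied by `q^M ∏ⱼ sⱼ`, the difference `E(d) - E(0)` becomes a polynomial in `q, s`;
at `q = 2, s = 1` that polynomial takes the value `2^M Σᵢ (2^{wᵢ} - 1)² / 2^{wᵢ} > 0`, so it is
nonzero, and so is `E(d) - E(0)`, since `q, s` are independent indeterminates.
-/

theorem WellFoundedLT.existsUnique_fixedPoint {ι β : Type*} [LT ι] [WellFoundedLT ι]
    [Nonempty β] (Φ : (ι → β) → ι → β)
    (hΦ : ∀ c c' x, (∀ y < x, c y = c' y) → Φ c x = Φ c' x) :
    ∃! c, Φ c = c := by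
  let c : ι → β := wellFounded_lt.fix fun x rec =>
    Φ (fun y => if h : y < x then rec y h else Classical.arbitrary β) x
  have hc : Φ c = c := funext fun x => by
    rw [show c x = _ from wellFounded_lt.fix_eq _ x]
    exact hΦ _ _ x fun y hy => by simp only [hy, dite_true]; rfl
  refine ⟨c, hc, fun c' hc' => funext fun x => ?_⟩
  induction x using WellFoundedLT.induction with
  | _ x ih => rw [← hc', ← hc, hΦ _ _ x ih]

namespace MvPowerSeries

variable {σ F : Type*}

theorem coeff_monomial_mul_congr [Semiring F] {e d : σ →₀ ℕ} (he : e ≠ 0) (a : F)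
    {f g : MvPowerSeries σ F} (h : ∀ d' < d, coeff d' f = coeff d' g) :
    coeff d (monomial e a * f) = coeff d (monomial e a * g) := by
  simp only [coeff_monomial_mul]
  split_ifs with hed
  · refine congrArg _ (h _ (lt_of_le_of_ne tsub_le_self fun hde => he ?_))
    have hd := tsub_add_cancel_of_le hed
    rw [hde] at hd
    exact left_eq_add.mp hd.symm
  · rfl

theorem existsUnique_eigenvector_of_triangular [Field F]
    (D L : MvPowerSeries σ F → MvPowerSeries σ F) (a : (σ →₀ ℕ) → F)
    (hD : ∀ f d, coeff d (D f) = a d * coeff d f - coeff d (L f))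
    (hL : ∀ f g d, (∀ d' < d, coeff d' f = coeff d' g) → coeff d (L f) = coeff d (L g))
    (hL0 : L 0 = 0) (ha : ∀ d ≠ 0, a d ≠ a 0) :
    ∃! f, coeff 0 f = 1 ∧ D f = a 0 • f := by
  have hL0' (f : MvPowerSeries σ F) : coeff 0 (L f) = 0 := by
    rw [hL f 0 0 fun d' hd' => (not_lt_zero hd').elim, hL0, map_zero]
  let Φ (f : MvPowerSeries σ F) (d : σ →₀ ℕ) : F :=
    if d = 0 then 1 else (a d - a 0)⁻¹ * coeff d (L f)
  refine (existsUnique_congr fun f => ?_).1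
    (WellFoundedLT.existsUnique_fixedPoint Φ fun f g d h => by simp only [Φ, hL f g d h])
  constructor
  · intro hf
    refine ⟨by simpa [Φ, coeff_apply] using (congrFun hf 0).symm, ext fun d => ?_⟩
    rw [hD, coeff_smul]
    by_cases hd : d = 0
    · simp [hd, hL0']
    · have hfd : (a d - a 0)⁻¹ * coeff d (L f) = coeff d f := by
        simpa [Φ, hd, coeff_apply] using congrFun hf d
      rw [inv_mul_eq_iff_eq_mul₀ (sub_ne_zero.2 (ha d hd))] at hfd
      linear_combination -hfd
  · rintro ⟨h0, hf⟩
    funext d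
    by_cases hd : d = 0
    · simpa [Φ, hd, coeff_apply] using h0.symm
    · have hfd := congrArg (coeff d) hf
      rw [hD, coeff_smul] at hfd
      simp only [Φ, if_neg hd, ← coeff_apply]
      rw [inv_mul_eq_iff_eq_mul₀ (sub_ne_zero.2 (ha d hd))]
      linear_combination -hfd

end MvPowerSeries

section ClearedLaurentPoly

open MvPolynomial

variable {σ R F : Type*} [CommRing R] [Field F]

def clearedLaurentPoly (o : σ) (x : ℕ → σ) (S : Finset ℕ) (w : ℕ → ℤ) (M : ℕ) :
    MvPolynomial σ R :=
  ∑ i ∈ S, (X (x i) ^ 2 * (X o ^ (M + w i).toNat - X o ^ M) + (X o ^ (M - w i).toNat - X o ^ M))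
    * ∏ j ∈ S.erase i, X (x j)

theorem map_clearedLaurentPoly (ψ : MvPolynomial σ R →+* F) {o : σ} {x : ℕ → σ} {S : Finset ℕ}
    {w : ℕ → ℤ} {M : ℕ} {u : F} {v : ℕ → F} (ho : ψ (X o) = u) (hx : ∀ i ∈ S, ψ (X (x i)) = v i)
    (hu : u ≠ 0) (hv : ∀ i ∈ S, v i ≠ 0) (hM : ∀ i ∈ S, |w i| ≤ M) :
    ψ (clearedLaurentPoly o x S w M)
      = (∑ i ∈ S, (v i * (u ^ w i - 1) + (v i)⁻¹ * (u ^ (-w i) - 1))) * (u ^ M * ∏ j ∈ S, v j) := by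
  have hpow : ∀ z : ℤ, |z| ≤ M → u ^ (M + z).toNat = u ^ M * u ^ z := fun z hz => by
    rw [← zpow_natCast, Int.toNat_of_nonneg (by linarith [neg_abs_le z]), zpow_add₀ hu,
      zpow_natCast]
  rw [clearedLaurentPoly, map_sum, Finset.sum_mul]
  refine Finset.sum_congr rfl fun i hi => ?_
  have hneg : |-w i| ≤ M := (abs_neg (w i)).symm ▸ hM i hi
  rw [← Finset.mul_prod_erase S _ hi]
  simp only [map_add, map_mul, map_sub, map_pow, map_prod, ho]
  rw [Finset.prod_congr rfl fun j hj => hx j (Finset.mem_of_mem_erase hj), hx i hi,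
    sub_eq_add_neg (M : ℤ), hpow _ (hM i hi), hpow _ hneg]
  field_simp [hv i hi]

end ClearedLaurentPoly

theorem sub_one_add_inv_sub_one_eq {α : Type*} [Field α] {x : α} (hx : x ≠ 0) :
    (x - 1) + (x⁻¹ - 1) = (x - 1) ^ 2 / x := by
  field_simp
  ring

namespace QToda

open MvPowerSeries

variable {F : Type*} [Field F]

/-- The exponent `d_{i-1} - d_i` of `q` in `Tq q i 1` at the monomial `y^d`. -/
def tqWeight (N i : ℕ) (d : Fin N →₀ ℕ) : ℤ :=
  ∑ j : Fin N,
    (((if (j : ℕ) + 2 = i then 1 else 0) - (if (j : ℕ) + 1 = i then 1 else 0)) * (d j : ℤ))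

theorem coeff_Tq (q : F) {N : ℕ} (i : ℕ) (ε : ℤ) (f : MvPowerSeries (Fin N) F)
    (d : Fin N →₀ ℕ) : coeff d (Tq q i ε f) = q ^ (ε * tqWeight N i d) * coeff d f := rfl

theorem Tq_zero (q : F) {N : ℕ} (i : ℕ) (ε : ℤ) : Tq q i ε (0 : MvPowerSeries (Fin N) F) = 0 := by
  ext d
  rw [coeff_Tq, map_zero, mul_zero]

theorem coeff_Y_mul_congr {N ℓ : ℕ} (hℓ : 1 ≤ ℓ) (hℓN : ℓ ≤ N) {f g : MvPowerSeries (Fin N) F}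
    {d : Fin N →₀ ℕ} (h : ∀ d' < d, coeff d' f = coeff d' g) :
    coeff d (Y ℓ * f) = coeff d (Y ℓ * g) := by
  refine coeff_monomial_mul_congr (fun he => ?_) 1 h
  have hℓ' := DFunLike.congr_fun he ⟨ℓ - 1, by omega⟩
  simp only [Finsupp.equivFunOnFinite_symm_apply_apply, Finsupp.coe_zero, Pi.zero_apply,
    ite_eq_right_iff, one_ne_zero, imp_false] at hℓ'
  omega

def eigenvalue (q : F) (s : ℕ → F) (N : ℕ) (d : Fin N →₀ ℕ) : F :=
  ∑ i ∈ Finset.Icc 1 N, (s i * q ^ tqWeight N i d + (s i)⁻¹ * q ^ (-tqWeight N i d))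

def lowerPart (q : F) (s : ℕ → F) (N : ℕ) (f : MvPowerSeries (Fin N) F) :
    MvPowerSeries (Fin N) F :=
  (∑ i ∈ Finset.Icc 1 (N - 1), s i • (Y i * Tq q i 1 f)) + s N • (Y N * Tq q N 1 f)
    + ∑ i ∈ Finset.Icc 2 N, (s i)⁻¹ • (Y (i - 1) * Tq q i (-1) f)

theorem coeff_DB (q : F) (s : ℕ → F) {N : ℕ} (hN : 1 ≤ N) (f : MvPowerSeries (Fin N) F)
    (d : Fin N →₀ ℕ) :
    coeff d (DB q s N f) = eigenvalue q s N d * coeff d f - coeff d (lowerPart q s N f) := by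
  have hsplit : DB q s N f = (∑ i ∈ Finset.Icc 1 (N - 1), s i • Tq q i 1 f) + s N • Tq q N 1 f
      + (s 1)⁻¹ • Tq q 1 (-1) f + (∑ i ∈ Finset.Icc 2 N, (s i)⁻¹ • Tq q i (-1) f)
      - lowerPart q s N f := by
    simp only [DB, lowerPart, sub_mul, one_mul, smul_sub, Finset.sum_sub_distrib]
    abel
  have htop (g : ℕ → F) : ∑ i ∈ Finset.Icc 1 N, g i = ∑ i ∈ Finset.Icc 1 (N - 1), g i + g N := by
    rw [show Finset.Icc 1 N = insert N (Finset.Icc 1 (N - 1)) by ext; simp; omega,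
      Finset.sum_insert (by simp; omega), add_comm]
  have hbot (g : ℕ → F) : ∑ i ∈ Finset.Icc 1 N, g i = g 1 + ∑ i ∈ Finset.Icc 2 N, g i := by
    rw [show Finset.Icc 1 N = insert 1 (Finset.Icc 2 N) by ext; simp; omega,
      Finset.sum_insert (by simp)]
  rw [hsplit, map_sub, eigenvalue, Finset.sum_add_distrib, htop, hbot]
  simp only [map_add, map_sum, MvPowerSeries.coeff_smul, coeff_Tq, add_mul, Finset.sum_mul,
    one_mul, neg_one_mul, mul_assoc]
  ring

theorem coeff_lowerPart_congr (q : F) (s : ℕ → F) {N : ℕ} (hN : 1 ≤ N)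
    {f g : MvPowerSeries (Fin N) F} {d : Fin N →₀ ℕ} (h : ∀ d' < d, coeff d' f = coeff d' g) :
    coeff d (lowerPart q s N f) = coeff d (lowerPart q s N g) := by
  have hT (i : ℕ) (ε : ℤ) : ∀ d' < d, coeff d' (Tq q i ε f) = coeff d' (Tq q i ε g) :=
    fun d' hd' => by rw [coeff_Tq, coeff_Tq, h d' hd']
  simp only [lowerPart, map_add, map_sum, MvPowerSeries.coeff_smul]
  congr 1
  congr 1
  · refine Finset.sum_congr rfl fun i hi => ?_
    rw [Finset.mem_Icc] at hi
    rw [coeff_Y_mul_congr hi.1 (by omega) (hT i 1)]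
  · rw [coeff_Y_mul_congr hN le_rfl (hT N 1)]
  · refine Finset.sum_congr rfl fun i hi => ?_
    rw [Finset.mem_Icc] at hi
    rw [coeff_Y_mul_congr (by omega) (by omega) (hT i (-1))]

theorem lowerPart_zero (q : F) (s : ℕ → F) (N : ℕ) : lowerPart q s N 0 = 0 := by
  simp [lowerPart, Tq_zero]

theorem eigenvalue_zero (q : F) (s : ℕ → F) (N : ℕ) :
    eigenvalue q s N 0 = ∑ i ∈ Finset.Icc 1 N, (s i + (s i)⁻¹) := by
  simp [eigenvalue, tqWeight]

theorem eigenvalue_sub_eigenvalue_zero (q : F) (s : ℕ → F) (N : ℕ) (d : Fin N →₀ ℕ) :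
    eigenvalue q s N d - eigenvalue q s N 0 = ∑ i ∈ Finset.Icc 1 N,
      (s i * (q ^ tqWeight N i d - 1) + (s i)⁻¹ * (q ^ (-tqWeight N i d) - 1)) := by
  rw [eigenvalue_zero, eigenvalue, ← Finset.sum_sub_distrib]
  exact Finset.sum_congr rfl fun i _ => by ring

theorem exists_tqWeight_ne_zero {N : ℕ} {d : Fin N →₀ ℕ} (hd : d ≠ 0) :
    ∃ i ∈ Finset.Icc 1 N, tqWeight N i d ≠ 0 := by
  set j := d.support.min' (Finsupp.support_nonempty_iff.2 hd)
  have hj : d j ≠ 0 := Finsupp.mem_support_iff.1 (Finset.min'_mem _ _)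
  have hbelow : ∀ j' < j, d j' = 0 := fun j' hj' => by
    by_contra h
    exact not_le.2 hj' (Finset.min'_le _ _ (Finsupp.mem_support_iff.2 h))
  refine ⟨j + 1, by simp only [Finset.mem_Icc]; omega, ?_⟩
  -- `tqWeight N (j + 1) d = d_{j-1} - d_j`, and `d_{j-1} = 0` by minimality of `j`
  rw [tqWeight, Finset.sum_eq_single j]
  · simp [hj]
  · intro j' _ hj'
    rcases lt_or_gt_of_ne hj' with hlt | hgt
    · simp [hbelow j' hlt]
    · rw [Fin.lt_def] at hgt
      rw [if_neg (by omega), if_neg (by omega), sub_zero, zero_mul]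
  · simp

theorem sP_eq_algebraMap {N i : ℕ} (hi : i ≤ N) :
    sP N i = algebraMap (MvPolynomial (Fin (N + 1)) ℚ) (K N)
      (MvPolynomial.X (Fin.ofNat (N + 1) i)) := by
  rw [sP, dif_pos hi]
  congr 2
  ext
  rw [Fin.val_ofNat, Nat.mod_eq_of_lt (Nat.lt_succ_of_le hi)]

theorem laurentSum_ne_zero {N : ℕ} {w : ℕ → ℤ} (hw : ∃ i ∈ Finset.Icc 1 N, w i ≠ 0) :
    ∑ i ∈ Finset.Icc 1 N, (sP N i * (qP N ^ w i - 1) + (sP N i)⁻¹ * (qP N ^ (-w i) - 1)) ≠ 0 := by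
  obtain ⟨i₀, hi₀, hw₀⟩ := hw
  set M := ∑ i ∈ Finset.Icc 1 N, (w i).natAbs
  have hM : ∀ i ∈ Finset.Icc 1 N, |w i| ≤ M := fun i hi => by
    rw [Int.abs_eq_natAbs, Nat.cast_le]
    exact Finset.single_le_sum (fun j _ => Nat.zero_le (w j).natAbs) hi
  have hvar : ∀ i ∈ Finset.Icc 1 N, Fin.ofNat (N + 1) i ≠ 0 := fun i hi h => by
    rw [Finset.mem_Icc] at hi
    rw [Fin.ext_iff, Fin.val_ofNat, Fin.val_zero, Nat.mod_eq_of_lt (by omega)] at h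
    omega
  have hinj := IsFractionRing.injective (MvPolynomial (Fin (N + 1)) ℚ) (K N)
  have hq : qP N ≠ 0 := (map_ne_zero_iff _ hinj).2 (MvPolynomial.X_ne_zero _)
  have hs : ∀ i ∈ Finset.Icc 1 N, sP N i ≠ 0 := fun i hi => by
    rw [sP_eq_algebraMap (Finset.mem_Icc.1 hi).2]
    exact (map_ne_zero_iff _ hinj).2 (MvPolynomial.X_ne_zero _)
  intro h0
  have hP : clearedLaurentPoly (R := ℚ) 0 (Fin.ofNat (N + 1)) (Finset.Icc 1 N) w M = 0 := by
    apply hinj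
    rw [map_clearedLaurentPoly (algebraMap _ (K N)) (o := 0) (u := qP N) (v := sP N) rfl
      (fun i hi => (sP_eq_algebraMap (Finset.mem_Icc.1 hi).2).symm) hq hs hM, h0, zero_mul,
      map_zero]
  have heval := congrArg (MvPolynomial.eval fun k => if k = 0 then (2 : ℚ) else 1) hP
  rw [map_clearedLaurentPoly (MvPolynomial.eval _) (u := 2) (v := fun _ => 1) (by simp)
    (fun i hi => by rw [MvPolynomial.eval_X, if_neg (hvar i hi)]) (by norm_num) (by simp) hM,
    map_zero] at heval
  have hterm (i : ℕ) : (1 : ℚ) * (2 ^ w i - 1) + 1⁻¹ * (2 ^ (-w i) - 1)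
      = (2 ^ w i - 1) ^ 2 / 2 ^ w i := by
    rw [one_mul, inv_one, one_mul, zpow_neg, sub_one_add_inv_sub_one_eq (by positivity)]
  have hpos : 0 < ∑ i ∈ Finset.Icc 1 N, ((1 : ℚ) * (2 ^ w i - 1) + 1⁻¹ * (2 ^ (-w i) - 1)) := by
    simp only [hterm]
    refine Finset.sum_pos' (fun i _ => by positivity) ⟨i₀, hi₀, div_pos ?_ (by positivity)⟩
    exact sq_pos_of_ne_zero
      (sub_ne_zero.2 ((zpow_eq_one_iff_right₀ (by norm_num) (by norm_num)).not.2 hw₀))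
  exact (mul_pos hpos (by positivity)).ne' heval

theorem eigenvalue_ne_eigenvalue_zero {N : ℕ} {d : Fin N →₀ ℕ} (hd : d ≠ 0) :
    eigenvalue (qP N) (sP N) N d ≠ eigenvalue (qP N) (sP N) N 0 := by
  rw [← sub_ne_zero, eigenvalue_sub_eigenvalue_zero]
  exact laurentSum_ne_zero (exists_tqWeight_ne_zero hd)

/-- Definition 2.6 well-posedness.  There exists a unique formal power
series `f ∈ Λ^{B_N} = ℚ(q,s)[[y₁,…,y_N]]` with constant term `1` satisfying the eigenvalue
equation `D^{B_N Toda}(x|s|q) f = Σ_{i=1}^N (sᵢ + sᵢ⁻¹) f`. -/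
theorem exists_unique_BToda (N : ℕ) (hN : 1 ≤ N) :
    ∃! f : MvPowerSeries (Fin N) (K N),
      MvPowerSeries.coeff 0 f = 1 ∧
      DB (qP N) (sP N) N f
        = (∑ i ∈ Finset.Icc 1 N, (sP N i + (sP N i)⁻¹)) • f := by
  rw [← eigenvalue_zero (qP N)]
  exact existsUnique_eigenvector_of_triangular _ (lowerPart (qP N) (sP N) N) _
    (coeff_DB _ _ hN) (fun _ _ _ => coeff_lowerPart_congr _ _ hN) (lowerPart_zero _ _ _)
    fun _ => eigenvalue_ne_eigenvalue_zero

end QToda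
end
end

section
/- Let K be a field (e.g. ℂ), let s₁, …, s_N ∈ K be nonzero and pairwise distinct, and let a₁, …, a_{N−1} ∈ K be arbitrary. Then ∏_{i=1}^{N−1} a_i = Σ_{k=1}^N (s_k/s_N) · [∏_{i=1}^{N−1} (1 − a_i s_k/s_i)] / [∏_{1≤i≤N, i≠k} (1 − s_k/s_i)]. -/
/-!
Clearing denominators, the `k`-th summand becomes `Q(s_k) / ∏_{j ≠ k} (s_k - s_j)` with
`Q(x) = ∏_{i < N} (a_i x - s_i)`: the prefactor `s_k / s_N` exactly cancels the products of the
`s_i` that appear. Since `deg Q < N`, Lagrange interpolation at the nodes `s_1, …, s_N` identifies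
this sum with the coefficient of `x^(N-1)` in `Q`, which is `∏_{i < N} a_i`.
-/

open Polynomial Finset

section

variable {ι R K : Type*} [CommRing R] [Field K]

lemma natDegree_C_mul_X_sub_C_le (a b : R) : (C a * X - C b).natDegree ≤ 1 := by
  simpa [sub_eq_add_neg] using natDegree_linear_le (a := a) (b := -b)

lemma natDegree_prod_C_mul_X_sub_C_le (u : Finset ι) (a b : ι → R) :
    (∏ i ∈ u, (C (a i) * X - C (b i))).natDegree ≤ #u :=
  (natDegree_prod_le _ _).trans <| by
    simpa using sum_le_card_nsmul u _ 1 fun i _ => natDegree_C_mul_X_sub_C_le (a i) (b i)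

lemma coeff_prod_C_mul_X_sub_C (u : Finset ι) (a b : ι → R) :
    (∏ i ∈ u, (C (a i) * X - C (b i))).coeff #u = ∏ i ∈ u, a i := by
  simpa using coeff_prod_of_natDegree_le (s := u) _ 1
    fun i _ => natDegree_C_mul_X_sub_C_le (a i) (b i)

lemma prod_one_sub_div {u : Finset ι} {s : ι → K} (hs : ∀ i ∈ u, s i ≠ 0) (y : ι → K) :
    ∏ i ∈ u, (1 - y i / s i) = (∏ i ∈ u, (y i - s i)) / ∏ i ∈ u, -s i := by
  rw [← prod_div_distrib]
  refine prod_congr rfl fun i hi => ?_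
  rw [div_neg, ← neg_div, neg_sub, one_sub_div (hs i hi)]

variable [DecidableEq ι]

lemma mul_prod_one_sub_div_div_prod_one_sub_div {t : Finset ι} {s : ι → K}
    (hs : ∀ i ∈ t, s i ≠ 0) (x : ι → K) {k m : ι} (hk : k ∈ t) (hm : m ∈ t) :
    s k / s m * ((∏ i ∈ t.erase m, (1 - x i / s i)) / ∏ i ∈ t.erase k, (1 - s k / s i)) =
      (∏ i ∈ t.erase m, (x i - s i)) / ∏ i ∈ t.erase k, (s k - s i) := by
  have hs' (j : ι) : ∀ i ∈ t.erase j, s i ≠ 0 := fun i hi => hs i (mem_of_mem_erase hi)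
  have hprod : s k * ∏ i ∈ t.erase k, -s i = s m * ∏ i ∈ t.erase m, -s i := by
    have h := (mul_prod_erase t (fun i => -s i) hk).trans
      (mul_prod_erase t (fun i => -s i) hm).symm
    simpa only [neg_mul, neg_inj] using h
  have hm0 : s m * ∏ i ∈ t.erase m, -s i ≠ 0 :=
    mul_ne_zero (hs m hm) (prod_ne_zero_iff.mpr fun i hi => neg_ne_zero.mpr (hs' m i hi))
  rw [prod_one_sub_div (hs' m) x, prod_one_sub_div (hs' k) fun _ => s k]
  calc _ = (∏ i ∈ t.erase m, (x i - s i)) / (∏ i ∈ t.erase k, (s k - s i)) *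
        ((s k * ∏ i ∈ t.erase k, -s i) / (s m * ∏ i ∈ t.erase m, -s i)) := by
        rw [div_div_div_eq]; ring
    _ = _ := by rw [hprod, div_self hm0, mul_one]

theorem prod_erase_eq_sum_mul_div {t : Finset ι} {s : ι → K} (hs : ∀ i ∈ t, s i ≠ 0)
    (hinj : Set.InjOn s t) (a : ι → K) {m : ι} (hm : m ∈ t) :
    ∏ i ∈ t.erase m, a i = ∑ k ∈ t, s k / s m *
      ((∏ i ∈ t.erase m, (1 - a i * s k / s i)) / ∏ i ∈ t.erase k, (1 - s k / s i)) := by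
  set P := ∏ i ∈ t.erase m, (C (a i) * X - C (s i))
  have hcard : #(t.erase m) = #t - 1 := card_erase_of_mem hm
  have hdeg : P.degree < #t := by
    have ht : 0 < #t := card_pos.mpr ⟨m, hm⟩
    refine degree_le_natDegree.trans_lt ?_
    exact_mod_cast (natDegree_prod_C_mul_X_sub_C_le _ a s).trans_lt (by omega)
  calc ∏ i ∈ t.erase m, a i = P.coeff (#t - 1) := by rw [← hcard, coeff_prod_C_mul_X_sub_C]
    _ = ∑ k ∈ t, P.eval (s k) / ∏ j ∈ t.erase k, (s k - s j) :=
      Lagrange.coeff_eq_sum hinj hdeg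
    _ = _ := sum_congr rfl fun k hk => by
      rw [mul_prod_one_sub_div_div_prod_one_sub_div hs _ hk hm, eval_prod]
      simp only [eval_sub, eval_mul, eval_C, eval_X]

end

/-- partial-fraction identity, eq. (3.3).  For a field `K`, nonzero and
pairwise distinct `s₁, …, s_N ∈ K` and arbitrary `a₁, …, a_{N-1} ∈ K`,
`∏_{i=1}^{N-1} a_i = Σ_{k=1}^N (s_k/s_N) ∏_{i=1}^{N-1} (1 - a_i s_k/s_i)
  / ∏_{1 ≤ i ≤ N, i ≠ k} (1 - s_k/s_i)`. -/
theorem partial_fraction_identity {K : Type*} [Field K] (N : ℕ) (hN : 1 ≤ N)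
    (s a : ℕ → K)
    (hs0 : ∀ i ∈ Finset.Icc 1 N, s i ≠ 0)
    (hsd : ∀ i ∈ Finset.Icc 1 N, ∀ j ∈ Finset.Icc 1 N, i ≠ j → s i ≠ s j) :
    ∏ i ∈ Finset.Icc 1 (N - 1), a i =
      ∑ k ∈ Finset.Icc 1 N, (s k / s N) *
        ((∏ i ∈ Finset.Icc 1 (N - 1), (1 - a i * s k / s i)) /
          ∏ i ∈ (Finset.Icc 1 N).erase k, (1 - s k / s i)) := by
  have hIcc : Icc 1 (N - 1) = (Icc 1 N).erase N := by ext i; simp only [mem_Icc, mem_erase]; omega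
  rw [hIcc]
  exact prod_erase_eq_sum_mul_div hs0 (fun i hi j hj => not_imp_not.mp (hsd i hi j hj)) a
    (mem_Icc.mpr ⟨hN, le_rfl⟩)
end

section
/- Let a₁, …, a_{N−1} ∈ ℂ and let s₁, …, s_N ∈ ℂ be pairwise distinct. Define F(s) := Σ_{k=1}^N [∏_{i=1}^{N−1} (s_i − a_i s_k)] / [∏_{1≤i≤N, i≠k} (s_i − s_k)]. Then for any indices ℓ ≠ ℓ′, the residue of F in the variable s_ℓ at the point s_ℓ = s_{ℓ′} vanishes: lim_{s_ℓ → s_{ℓ′}} F(s)·(s_ℓ − s_{ℓ′}) = 0 (the other variables s_i, i ≠ ℓ, being held fixed, pairwise distinct, and distinct from s_{ℓ′}). Consequently F, as a rational function of s_ℓ, has no pole at s_ℓ = s_{ℓ′}. -/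
open scoped BigOperators

noncomputable section

/-- The function `F` of the variable `s_ℓ = z` (the other `s_i` held fixed):
`F(s) = Σ_{k=1}^N ∏_{i=1}^{N-1} (s_i - a_i s_k) / ∏_{1≤i≤N, i≠k} (s_i - s_k)`. -/
def Fres (N : ℕ) (a s : ℕ → ℂ) (ℓ : ℕ) (z : ℂ) : ℂ :=
  ∑ k ∈ Finset.Icc 1 N,
    (∏ i ∈ Finset.Icc 1 (N - 1),
        ((if i = ℓ then z else s i) - a i * (if k = ℓ then z else s k)))
      / ∏ i ∈ (Finset.Icc 1 N).erase k,
          ((if i = ℓ then z else s i) - (if k = ℓ then z else s k))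

/-!
Put `s_ℓ = z` and `Q(z) = ∏_{i ≠ ℓ, ℓ'} (s_i - z)`. Only the summands `k = ℓ` and `k = ℓ'` of `F`
are singular at `z = s_ℓ'`; their denominators are `(s_ℓ' - z) Q(z)` and `(z - s_ℓ') Q(s_ℓ')`.
At `z = s_ℓ'` the points `s_ℓ` and `s_ℓ'` coincide, so the two numerators agree there and the
sum of the two summands is the difference quotient at `s_ℓ'` of a differentiable function
vanishing at `s_ℓ'`. Hence `F` has a finite limit at `s_ℓ'`, and `F(z) (z - s_ℓ') → 0`.
-/

open Filter Topology Function

section DifferenceQuotient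

variable {𝕜 : Type*} [NontriviallyNormedField 𝕜]

theorem tendsto_div_sub_deriv {f : 𝕜 → 𝕜} {c : 𝕜} (hf : DifferentiableAt 𝕜 f c) (hc : f c = 0) :
    Tendsto (fun z => f z / (z - c)) (𝓝[≠] c) (𝓝 (deriv f c)) :=
  (hasDerivAt_iff_tendsto_slope.1 hf.hasDerivAt).congr fun z => by
    rw [slope_def_field, hc, sub_zero]

/-- The residues `-p c / Q c` and `q c / Q c` of the two summands at `c` cancel. -/
theorem exists_tendsto_div_add_div {p q Q : 𝕜 → 𝕜} {c : 𝕜} (hp : DifferentiableAt 𝕜 p c)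
    (hq : DifferentiableAt 𝕜 q c) (hQ : DifferentiableAt 𝕜 Q c) (hpq : p c = q c)
    (hQc : Q c ≠ 0) :
    ∃ L, Tendsto (fun z => p z / ((c - z) * Q z) + q z / ((z - c) * Q c)) (𝓝[≠] c) (𝓝 L) := by
  set g : 𝕜 → 𝕜 := fun z => q z * Q z - p z * Q c
  have hg : DifferentiableAt 𝕜 g c := (hq.mul hQ).sub (hp.mul_const _)
  have hgc : g c = 0 := by simp only [g, hpq, sub_self]
  have hQt : Tendsto Q (𝓝[≠] c) (𝓝 (Q c)) := hQ.continuousAt.tendsto.mono_left nhdsWithin_le_nhds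
  refine ⟨deriv g c / (Q c * Q c),
    ((tendsto_div_sub_deriv hg hgc).div (hQt.mul_const _) (mul_ne_zero hQc hQc)).congr' ?_⟩
  filter_upwards [self_mem_nhdsWithin, hQt.eventually_ne hQc] with z hz hQz
  have hzc : z - c ≠ 0 := sub_ne_zero.2 hz
  have hcz : c - z ≠ 0 := sub_ne_zero.2 (Ne.symm hz)
  simp only [Pi.div_apply, g]
  field_simp
  ring

theorem Filter.Tendsto.mul_sub_tendsto_zero {f : 𝕜 → 𝕜} {c L : 𝕜}
    (hf : Tendsto f (𝓝[≠] c) (𝓝 L)) :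
    Tendsto (fun z => f z * (z - c)) (𝓝[≠] c) (𝓝 0) := by
  simpa using hf.mul (tendsto_sub_nhds_zero_iff.2 (tendsto_nhdsWithin_of_tendsto_nhds tendsto_id))

end DifferenceQuotient

section PartialFractions

variable {R : Type*} [CommRing R]

def Fnum (N : ℕ) (a t : ℕ → R) (k : ℕ) : R :=
  ∏ i ∈ Finset.Icc 1 (N - 1), (t i - a i * t k)

def Fden (T : Finset ℕ) (t : ℕ → R) (k : ℕ) : R :=
  ∏ i ∈ T.erase k, (t i - t k)

theorem Fres_eq_sum (N : ℕ) (a s : ℕ → ℂ) (ℓ : ℕ) (z : ℂ) :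
    Fres N a s ℓ z =
      ∑ k ∈ Finset.Icc 1 N, Fnum N a (update s ℓ z) k / Fden (Finset.Icc 1 N) (update s ℓ z) k := by
  simp only [Fres, Fnum, Fden, update_apply]

theorem Fnum_congr {N : ℕ} {a t : ℕ → R} {k k' : ℕ} (h : t k = t k') :
    Fnum N a t k = Fnum N a t k' := by
  simp only [Fnum, h]

theorem Fden_update_self {T : Finset ℕ} {ℓ ℓ' : ℕ} (h : ℓ' ∈ T.erase ℓ) (s : ℕ → R) (z : R) :
    Fden T (update s ℓ z) ℓ = (s ℓ' - z) * ∏ i ∈ (T.erase ℓ).erase ℓ', (s i - z) := by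
  have hsub : Fden T (update s ℓ z) ℓ = ∏ i ∈ T.erase ℓ, (s i - z) :=
    Finset.prod_congr rfl fun i hi => by rw [update_self, update_of_ne (Finset.ne_of_mem_erase hi)]
  rw [hsub, ← Finset.mul_prod_erase _ _ h]

theorem Fden_update_of_ne {T : Finset ℕ} {ℓ ℓ' : ℕ} (h : ℓ ∈ T.erase ℓ') (hne : ℓ' ≠ ℓ)
    (s : ℕ → R) (z : R) :
    Fden T (update s ℓ z) ℓ' = (z - s ℓ') * ∏ i ∈ (T.erase ℓ).erase ℓ', (s i - s ℓ') := by
  rw [Fden, ← Finset.mul_prod_erase _ _ h, update_self, update_of_ne hne, Finset.erase_right_comm]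
  congr 1
  exact Finset.prod_congr rfl fun i hi => by
    rw [update_of_ne (Finset.ne_of_mem_erase (Finset.mem_of_mem_erase hi))]

theorem Fden_update_ne_zero [IsDomain R] {T : Finset ℕ} {s : ℕ → R} {ℓ ℓ' k : ℕ}
    (hinj : Set.InjOn s ↑(T.erase ℓ)) (hℓ' : ℓ' ∈ T.erase ℓ) (hk : k ∈ (T.erase ℓ).erase ℓ') :
    Fden T (update s ℓ (s ℓ')) k ≠ 0 := by
  obtain ⟨hkℓ', hkT⟩ := Finset.mem_erase.1 hk
  refine Finset.prod_ne_zero_iff.2 fun i hi => sub_ne_zero.2 ?_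
  rw [update_of_ne (Finset.ne_of_mem_erase hkT)]
  obtain ⟨hik, hiT⟩ := Finset.mem_erase.1 hi
  rcases eq_or_ne i ℓ with rfl | hiℓ
  · rw [update_self]
    exact hinj.ne hℓ' hkT (Ne.symm hkℓ')
  · rw [update_of_ne hiℓ]
    exact hinj.ne (Finset.mem_erase.2 ⟨hiℓ, hiT⟩) hkT hik

end PartialFractions

section Differentiability

variable {𝕜 : Type*} [NontriviallyNormedField 𝕜] {ι : Type*} [DecidableEq ι]

theorem differentiable_update_apply (s : ι → 𝕜) (ℓ i : ι) :
    Differentiable 𝕜 fun z => update s ℓ z i := by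
  rcases eq_or_ne i ℓ with rfl | h
  · simp
  · simp [update_of_ne h]

variable (N : ℕ) (a s : ℕ → 𝕜) (ℓ k : ℕ)

theorem differentiable_Fnum_update : Differentiable 𝕜 fun z => Fnum N a (update s ℓ z) k :=
  Differentiable.fun_finsetProd fun i _ =>
    (differentiable_update_apply s ℓ i).sub ((differentiable_update_apply s ℓ k).const_mul _)

theorem differentiable_Fden_update (T : Finset ℕ) :
    Differentiable 𝕜 fun z => Fden T (update s ℓ z) k :=
  Differentiable.fun_finsetProd fun i _ =>
    (differentiable_update_apply s ℓ i).sub (differentiable_update_apply s ℓ k)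

end Differentiability

/-- residue computation in the proof of Proposition 3.1.  For any
`ℓ ≠ ℓ'`, the residue of `F` in the variable `s_ℓ` at `s_ℓ = s_{ℓ'}` vanishes:
`lim_{s_ℓ → s_{ℓ'}} F(s)(s_ℓ - s_{ℓ'}) = 0`, the other variables `s_i` (`i ≠ ℓ`) being held
fixed and pairwise distinct.  Consequently `F`, as a rational function of `s_ℓ`, has no pole
at `s_ℓ = s_{ℓ'}`: it tends to a finite limit there. -/
theorem residue_vanishes (N : ℕ) (a s : ℕ → ℂ) (ℓ ℓ' : ℕ)
    (hℓ : ℓ ∈ Finset.Icc 1 N) (hℓ' : ℓ' ∈ Finset.Icc 1 N) (hne : ℓ ≠ ℓ')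
    (hdist : ∀ i ∈ Finset.Icc 1 N, ∀ j ∈ Finset.Icc 1 N,
      i ≠ ℓ → j ≠ ℓ → i ≠ j → s i ≠ s j) :
    Filter.Tendsto (fun z : ℂ => Fres N a s ℓ z * (z - s ℓ'))
      (nhdsWithin (s ℓ') {s ℓ'}ᶜ) (nhds 0)
    ∧ ∃ L : ℂ, Filter.Tendsto (fun z : ℂ => Fres N a s ℓ z)
        (nhdsWithin (s ℓ') {s ℓ'}ᶜ) (nhds L) := by
  set T := Finset.Icc 1 N
  set S := (T.erase ℓ).erase ℓ'
  have hℓ'T : ℓ' ∈ T.erase ℓ := Finset.mem_erase.2 ⟨hne.symm, hℓ'⟩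
  have hℓT : ℓ ∈ T.erase ℓ' := Finset.mem_erase.2 ⟨hne, hℓ⟩
  have hinj : Set.InjOn s ↑(T.erase ℓ) := fun i hi j hj => by
    obtain ⟨hiℓ, hiT⟩ := Finset.mem_erase.1 hi
    obtain ⟨hjℓ, hjT⟩ := Finset.mem_erase.1 hj
    exact fun hs => by_contra fun hij => hdist i hiT j hjT hiℓ hjℓ hij hs
  have hsplit : ∀ z, Fres N a s ℓ z =
      (Fnum N a (update s ℓ z) ℓ / ((s ℓ' - z) * ∏ i ∈ S, (s i - z))
        + Fnum N a (update s ℓ z) ℓ' / ((z - s ℓ') * ∏ i ∈ S, (s i - s ℓ')))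
      + ∑ k ∈ S, Fnum N a (update s ℓ z) k / Fden T (update s ℓ z) k := fun z => by
    rw [Fres_eq_sum, ← Finset.add_sum_erase _ _ hℓ, ← Finset.add_sum_erase _ _ hℓ'T,
      Fden_update_self hℓ'T, Fden_update_of_ne hℓT hne.symm, add_assoc]
  have hQ : ∏ i ∈ S, (s i - s ℓ') ≠ 0 := Finset.prod_ne_zero_iff.2 fun i hi =>
    sub_ne_zero.2 (hinj.ne (Finset.mem_of_mem_erase hi) hℓ'T (Finset.ne_of_mem_erase hi))
  obtain ⟨L, hsing⟩ := exists_tendsto_div_add_div (Q := fun z => ∏ i ∈ S, (s i - z))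
    ((differentiable_Fnum_update N a s ℓ ℓ).differentiableAt)
    ((differentiable_Fnum_update N a s ℓ ℓ').differentiableAt)
    (by fun_prop) (Fnum_congr (by rw [update_self, update_of_ne hne.symm])) hQ
  have hreg := tendsto_finsetSum (x := 𝓝[≠] s ℓ') S fun k hk =>
    (((differentiable_Fnum_update N a s ℓ k).continuous.continuousAt).div
      (differentiable_Fden_update s ℓ k T).continuous.continuousAt
      (Fden_update_ne_zero hinj hℓ'T hk)).tendsto.mono_left nhdsWithin_le_nhds
  have hF : Tendsto (Fres N a s ℓ) (𝓝[≠] s ℓ') _ :=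
    (hsing.add hreg).congr fun z => (hsplit z).symm
  exact ⟨hF.mul_sub_tendsto_zero, _, hF⟩
end
end

section
/- Let N ≥ 2 and let θ = (θ_{i,j}) be an N×N strictly upper triangular matrix with nonnegative integer entries. Then, in ℚ(q, s₁, …, s_N), the coefficient c^{Toda}_N factorizes as c^{Toda}_N((θ_{i,j})_{1≤i<j≤N}; (s_i)_{1≤i≤N}; q) = d^{Toda}_N((θ_{i,N})_{1≤i≤N−1}; (s_i)_{1≤i≤N}; q) · c^{Toda}_{N−1}((θ_{i,j})_{1≤i<j≤N−1}; (q^{−θ_{i,N}} s_i)_{1≤i≤N−1}; q), where d^{Toda}_N(θ; s; q) := ∏_{i=1}^{N−1} [1/(q;q)_{θ_i}] · [q^{θ_i}/(q s_N/s_i; q)_{θ_i}] · ∏_{1≤i<j≤N−1} [1/(q s_j/s_i; q)_{θ_i}] · [q^{θ_i}/(q^{θ_j−θ_i+1} s_i/s_j; q)_{θ_i}]. -/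
open scoped BigOperators

noncomputable section

attribute [local instance] Classical.propDecidable

namespace QToda

/-! The product defining `c^{Toda}_N` runs over `k = 2, …, N`. In the factor `k = N` the inner
sums over `a` are empty; splitting off the diagonal `i = j` and reindexing `j + 1 ↦ j` turns it
into `d^{Toda}_N(θ_{·,N})`. In a factor `k < N` the summand `a = N` contributes
`q^{θ_{i,N} - θ_{j,N}}` to the arguments, which is exactly the effect of replacing every `s_i`
by `q^{-θ_{i,N}} s_i`, so these factors make up `c^{Toda}_{N-1}` at the shifted parameters. -/

open Finset

section PairProducts

variable {β : Type*} [CommMonoid β]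

theorem prod_filter_le_eq_prod_prod_Icc (a b : ℕ) (f : ℕ × ℕ → β) :
    ∏ p ∈ (Icc a b ×ˢ Icc a b).filter (fun p => p.1 ≤ p.2), f p
      = ∏ i ∈ Icc a b, ∏ j ∈ Icc i b, f (i, j) :=
  prod_finset_product _ _ _ fun p => by simp only [mem_filter, mem_product, mem_Icc]; omega

theorem prod_pairsLT_eq_prod_prod_Ioc (a b : ℕ) (f : ℕ × ℕ → β) :
    ∏ p ∈ pairsLT a b, f p = ∏ i ∈ Icc a b, ∏ j ∈ Ioc i b, f (i, j) :=
  prod_finset_product _ _ _ fun p => by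
    simp only [pairsLT, mem_filter, mem_product, mem_Icc, mem_Ioc]; omega

theorem prod_Icc_add_one_eq_prod_Ioc_mul {i M : ℕ} (h : i ≤ M) (f : ℕ → β) :
    ∏ j ∈ Icc i M, f (j + 1) = (∏ j ∈ Ioc i M, f j) * f (M + 1) := by
  rw [← prod_Ioc_succ_top h, ← Icc_add_one_left_eq_Ioc, ← image_add_right_Icc,
    prod_image fun x _ y _ => Nat.add_right_cancel]

end PairProducts

variable {F : Type*} [Field F]

def cTodaFactor (q : F) (s : ℕ → F) (N : ℕ) (θ : ℕ → ℕ → ℕ) (k : ℕ) : F :=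
  ∏ p ∈ (Icc 1 (k - 1) ×ˢ Icc 1 (k - 1)).filter (fun p => p.1 ≤ p.2),
    (1 / qPoch q
        (q ^ (∑ a ∈ Icc (k + 1) N, ((θ p.1 a : ℤ) - (θ (p.2 + 1) a : ℤ)))
          * q * s (p.2 + 1) / s p.1) (θ p.1 k))
    * (q ^ (θ p.1 k)
        / qPoch q
          (q ^ ((θ p.2 k : ℤ) - (θ p.1 k : ℤ)
              - ∑ a ∈ Icc (k + 1) N, ((θ p.1 a : ℤ) - (θ p.2 a : ℤ)))
            * q * s p.1 / s p.2) (θ p.1 k))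

theorem cToda_eq_prod_cTodaFactor (q : F) (s : ℕ → F) (N : ℕ) (θ : ℕ → ℕ → ℕ) :
    cToda q s N θ = ∏ k ∈ Icc 2 N, cTodaFactor q s N θ k :=
  rfl

variable {q : F}

theorem shiftAll_div_shiftAll (hq : q ≠ 0) (s : ℕ → F) (t : ℕ → ℕ) (i j : ℕ) :
    shiftAll q s t j / shiftAll q s t i = q ^ ((t i : ℤ) - t j) * (s j / s i) := by
  simp only [shiftAll, zpow_sub₀ hq, zpow_neg]
  field_simp

theorem cTodaFactor_succ_of_le (hq : q ≠ 0) (s : ℕ → F) (θ : ℕ → ℕ → ℕ) {M k : ℕ}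
    (hk : k ≤ M) :
    cTodaFactor q s (M + 1) θ k = cTodaFactor q (shiftAll q s (θ · (M + 1))) M θ k := by
  refine prod_congr rfl fun p _ => ?_
  simp only [sum_Icc_succ_top (by omega : k + 1 ≤ M + 1), mul_div_assoc,
    shiftAll_div_shiftAll hq]
  congr 3
  · rw [← mul_assoc, mul_right_comm (q ^ _) q (q ^ _), ← zpow_add₀ hq]
  · rw [← mul_assoc, mul_right_comm (q ^ _) q (q ^ _), ← zpow_add₀ hq]
    ring_nf

theorem cTodaFactor_top (hq : q ≠ 0) {s : ℕ → F} {M : ℕ} (hs : ∀ i ∈ Icc 1 M, s i ≠ 0)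
    (θ : ℕ → ℕ → ℕ) :
    cTodaFactor q s (M + 1) θ (M + 1) = dToda q s (M + 1) (θ · (M + 1)) := by
  have hempty : Icc (M + 1 + 1) (M + 1) = ∅ := Icc_eq_empty (by omega)
  simp only [cTodaFactor, dToda, hempty, sum_empty, zpow_zero, one_mul, sub_zero,
    Nat.add_sub_cancel, prod_filter_le_eq_prod_prod_Icc, prod_pairsLT_eq_prod_prod_Ioc,
    ← prod_mul_distrib]
  refine prod_congr rfl fun i hi => ?_
  have hiM := (mem_Icc.1 hi).2
  rw [prod_mul_distrib,
    prod_Icc_add_one_eq_prod_Ioc_mul hiM fun j => 1 / qPoch q (q * s j / s i) (θ i (M + 1)),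
    ← mul_prod_Ioc_eq_prod_Icc hiM, sub_self, zpow_zero, one_mul,
    mul_div_cancel_right₀ q (hs i hi)]
  simp only [zpow_add_one₀ hq, prod_mul_distrib]
  ring

theorem cToda_succ (hq : q ≠ 0) {s : ℕ → F} {M : ℕ} (hs : ∀ i ∈ Icc 1 M, s i ≠ 0)
    (θ : ℕ → ℕ → ℕ) :
    cToda q s (M + 1) θ
      = dToda q s (M + 1) (θ · (M + 1)) * cToda q (shiftAll q s (θ · (M + 1))) M θ := by
  rcases M.eq_zero_or_pos with rfl | hM
  · simp [cToda, dToda, pairsLT]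
  rw [cToda_eq_prod_cTodaFactor, prod_Icc_succ_top (by omega : 2 ≤ M + 1),
    cTodaFactor_top hq hs, mul_comm, cToda_eq_prod_cTodaFactor]
  exact congrArg _ (prod_congr rfl fun k hk => cTodaFactor_succ_of_le hq s θ (mem_Icc.1 hk).2)

theorem algebraMap_X_ne_zero {R σ : Type*} [CommRing R] [IsDomain R] (i : σ) :
    algebraMap (MvPolynomial σ R) (FractionRing (MvPolynomial σ R)) (MvPolynomial.X i) ≠ 0 :=
  (map_ne_zero_iff _ (IsFractionRing.injective _ _)).2 (MvPolynomial.X_ne_zero i)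

theorem qP_ne_zero (N : ℕ) : qP N ≠ 0 :=
  algebraMap_X_ne_zero _

theorem sP_ne_zero {N i : ℕ} (hi : i ≤ N) : sP N i ≠ 0 := by
  rw [sP, dif_pos hi]
  exact algebraMap_X_ne_zero _

theorem cToda_factorization_general (N : ℕ) (θ : ℕ → ℕ → ℕ) :
    cToda (qP N) (sP N) N θ =
      dToda (qP N) (sP N) N (fun i => θ i N) *
        cToda (qP N) (shiftAll (qP N) (sP N) (fun i => θ i N)) (N - 1) θ := by
  cases N with
  | zero => simp [cToda, dToda, pairsLT]
  | succ M =>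
    exact cToda_succ (qP_ne_zero _) (fun i hi => sP_ne_zero ((mem_Icc.1 hi).2.trans M.le_succ)) θ

/-- Notation 2.4, factorization of `c^{Toda}_N`.  For `N ≥ 2` and a
strictly upper triangular nonnegative integer matrix `θ`, in `ℚ(q, s₁, …, s_N)`:
`c^{Toda}_N((θ_{i,j})_{i<j≤N}; (s_i); q)
 = d^{Toda}_N((θ_{i,N})_{i≤N-1}; (s_i); q)
   · c^{Toda}_{N-1}((θ_{i,j})_{i<j≤N-1}; (q^{-θ_{i,N}} s_i); q)`. -/
theorem cToda_factorization (N : ℕ) (hN : 2 ≤ N) (θ : ℕ → ℕ → ℕ) (hθ : UT N θ) :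
    cToda (qP N) (sP N) N θ =
      dToda (qP N) (sP N) N (fun i => θ i N) *
        cToda (qP N) (shiftAll (qP N) (sP N) (fun i => θ i N)) (N - 1) θ :=
  cToda_factorization_general N θ

end QToda
end
end

section
/- Let Q₁, …, Q_N ∈ ℂ be nonzero and let s₁, …, s_N ∈ ℂ be nonzero and satisfy s_i ≠ s_k and s_i s_k ≠ 1 for all i ≠ k. Then Σ_{i=1}^N ((1 − Q_i) s_i + (1 − Q_i^{−1}) s_i^{−1}) = Σ_{k=1}^N s_k · [∏_{i=1}^N (1 − Q_i s_i/s_k)(1 − Q_i^{−1}/(s_i s_k))] / [∏_{1≤i≤N, i≠k} (1 − s_i/s_k)(1 − 1/(s_i s_k))]. -/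
/-!
With `u = s + s⁻¹` and `b = Q s + (Q s)⁻¹`, every factor `(1 - a/s_k)(1 - a⁻¹/s_k)` of the
right-hand side equals `(u_k - (a + a⁻¹)) / s_k`, and the summand on the left is `u_i - b_i`.
Since `s + s⁻¹ = t + t⁻¹` iff `s = t` or `s t = 1`, the nodes `u_k` are distinct, and the
identity becomes `∑_k ∏_i (u_k - b_i) / ∏_{j ≠ k} (u_k - u_j) = ∑ u - ∑ b`. This is Lagrange
interpolation: the left side is the coefficient of `X^(N-1)` in `∏ (X - b_i) - ∏ (X - u_i)`,
a polynomial of degree `< N` that takes the value `∏_i (u_k - b_i)` at each node `u_k`.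
-/

open Finset Polynomial

namespace Lagrange

variable {F ι κ : Type*} [Field F] [DecidableEq ι]

theorem sum_prod_sub_div_prod_erase_sub {s : Finset ι} {t : Finset κ} (hcard : #t = #s)
    {v : ι → F} (hvs : Set.InjOn v s) (b : κ → F) :
    ∑ k ∈ s, (∏ i ∈ t, (v k - b i)) / ∏ j ∈ s.erase k, (v k - v j)
      = ∑ k ∈ s, v k - ∑ i ∈ t, b i := by
  rcases s.eq_empty_or_nonempty with rfl | hs
  · simp [card_eq_zero.mp hcard]
  set P := nodal t b - nodal s v
  have hdeg : P.degree < #s := by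
    have h := degree_sub_lt_left (p := nodal t b) (q := nodal s v)
      (by rw [degree_nodal, degree_nodal, hcard]) nodal_monic.ne_zero
      (by rw [nodal_monic.leadingCoeff, nodal_monic.leadingCoeff])
    rwa [degree_nodal, hcard] at h
  have hcoeff : P.coeff (#s - 1) = ∑ k ∈ s, v k - ∑ i ∈ t, b i := by
    have ht : 0 < #t := hcard ▸ hs.card_pos
    rw [coeff_sub, nodal, nodal, ← hcard, prod_X_sub_C_coeff_card_pred t b ht, hcard,
      prod_X_sub_C_coeff_card_pred s v hs.card_pos, sub_neg_eq_add, neg_add_eq_sub]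
  rw [← hcoeff, coeff_eq_sum hvs hdeg]
  refine sum_congr rfl fun k hk => ?_
  rw [eval_sub, eval_nodal_at_node hk, sub_zero, eval_nodal]

end Lagrange

section Joukowski

variable {F : Type*} [Field F]

theorem add_inv_eq_add_inv_iff {x y : F} (hx : x ≠ 0) (hy : y ≠ 0) :
    x + x⁻¹ = y + y⁻¹ ↔ x = y ∨ x * y = 1 := by
  have h : x + x⁻¹ - (y + y⁻¹) = (x - y) * (x * y - 1) / (x * y) := by
    field_simp
    ring
  rw [← sub_eq_zero, h, div_eq_zero_iff, mul_eq_zero, sub_eq_zero, sub_eq_zero]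
  simp [hx, hy]

theorem one_sub_div_mul_one_sub_inv_div {a x : F} (ha : a ≠ 0) (hx : x ≠ 0) :
    (1 - a / x) * (1 - a⁻¹ / x) = (x + x⁻¹ - (a + a⁻¹)) / x := by
  field_simp
  ring

end Joukowski

theorem mul_prod_div_div_prod_div {F ι κ : Type*} [Field F] {x : F} (hx : x ≠ 0)
    {t : Finset ι} {r : Finset κ} (hcard : #t = #r + 1) (A : ι → F) (B : κ → F) :
    x * ((∏ i ∈ t, A i / x) / ∏ j ∈ r, B j / x)
      = (∏ i ∈ t, A i) / ∏ j ∈ r, B j := by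
  rw [prod_div_distrib, prod_div_distrib, prod_const, prod_const, hcard, pow_succ]
  field_simp

/-- eq. (3.11).  For nonzero `Q₁,…,Q_N ∈ ℂ` and nonzero `s₁,…,s_N ∈ ℂ`
with `s_i ≠ s_k` and `s_i s_k ≠ 1` for all `i ≠ k`:
`Σ_{i=1}^N ((1-Q_i) s_i + (1-Q_i⁻¹) s_i⁻¹)
 = Σ_{k=1}^N s_k ∏_{i=1}^N (1 - Q_i s_i/s_k)(1 - Q_i⁻¹/(s_i s_k))
     / ∏_{i≠k} (1 - s_i/s_k)(1 - 1/(s_i s_k))`. -/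
theorem rational_identity_typeB_complex (N : ℕ) (Q s : ℕ → ℂ)
    (hQ : ∀ i ∈ Finset.Icc 1 N, Q i ≠ 0)
    (hs : ∀ i ∈ Finset.Icc 1 N, s i ≠ 0)
    (hd : ∀ i ∈ Finset.Icc 1 N, ∀ k ∈ Finset.Icc 1 N, i ≠ k → s i ≠ s k)
    (hp : ∀ i ∈ Finset.Icc 1 N, ∀ k ∈ Finset.Icc 1 N, i ≠ k → s i * s k ≠ 1) :
    ∑ i ∈ Finset.Icc 1 N, ((1 - Q i) * s i + (1 - (Q i)⁻¹) * (s i)⁻¹)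
    = ∑ k ∈ Finset.Icc 1 N, s k *
        ((∏ i ∈ Finset.Icc 1 N, (1 - Q i * s i / s k) * (1 - (Q i)⁻¹ / (s i * s k)))
          / ∏ i ∈ (Finset.Icc 1 N).erase k,
              (1 - s i / s k) * (1 - 1 / (s i * s k))) := by
  set T := Finset.Icc 1 N
  set u : ℕ → ℂ := fun i => s i + (s i)⁻¹
  set b : ℕ → ℂ := fun i => Q i * s i + (Q i * s i)⁻¹
  have hu : Set.InjOn u T := fun i hi k hk huik => by
    by_contra hik
    rcases (add_inv_eq_add_inv_iff (hs i hi) (hs k hk)).mp huik with h | h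
    exacts [hd i hi k hk hik h, hp i hi k hk hik h]
  have hnum : ∀ k ∈ T, ∀ i ∈ T,
      (1 - Q i * s i / s k) * (1 - (Q i)⁻¹ / (s i * s k)) = (u k - b i) / s k := by
    intro k hk i hi
    rw [← one_sub_div_mul_one_sub_inv_div (mul_ne_zero (hQ i hi) (hs i hi)) (hs k hk), mul_inv]
    ring
  have hden : ∀ k ∈ T, ∀ i ∈ T.erase k,
      (1 - s i / s k) * (1 - 1 / (s i * s k)) = (u k - u i) / s k := by
    intro k hk i hi
    rw [← one_sub_div_mul_one_sub_inv_div (hs i (mem_of_mem_erase hi)) (hs k hk)]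
    ring
  calc ∑ i ∈ T, ((1 - Q i) * s i + (1 - (Q i)⁻¹) * (s i)⁻¹)
      = ∑ k ∈ T, u k - ∑ i ∈ T, b i := by
        rw [← sum_sub_distrib]
        refine sum_congr rfl fun i _ => ?_
        simp only [u, b, mul_inv]
        ring
    _ = ∑ k ∈ T, (∏ i ∈ T, (u k - b i)) / ∏ j ∈ T.erase k, (u k - u j) :=
        (Lagrange.sum_prod_sub_div_prod_erase_sub rfl hu b).symm
    _ = _ := sum_congr rfl fun k hk => by
        rw [prod_congr rfl (hnum k hk), prod_congr rfl (hden k hk),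
          mul_prod_div_div_prod_div (hs k hk) (card_erase_add_one hk).symm]
end

section
/- Let Q₁, …, Q_N ∈ ℂ be nonzero, fix an index ℓ, and let the variables s_i (i ≠ ℓ) be nonzero complex numbers with s_i ≠ s_j and s_i s_j ≠ 1 for i ≠ j (i, j ≠ ℓ). Define F(s) := Σ_{k=1}^N s_k · [∏_{i=1}^N (1 − Q_i s_i/s_k)(1 − Q_i^{−1}/(s_i s_k))] / [∏_{i≠k} (1 − s_i/s_k)(1 − 1/(s_i s_k))] as a function of s_ℓ. Then the residues of F at s_ℓ = 0 and s_ℓ = ∞ are given by lim_{s_ℓ → 0} s_ℓ · F(s) = 1 − Q_ℓ^{−1} and lim_{s_ℓ → ∞} F(s)/s_ℓ = 1 − Q_ℓ. -/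
/-!
Write `c(q; x, y) = (1 - q x / y)(1 - q⁻¹ / (x y))`. The `k`-th summand of `F` is
`s_k ∏_i c(Q_i; s_i, s_k) / ∏_{i ≠ k} c(1; s_i, s_k)`: its denominator factors are its numerator
factors at `Q_i = 1`. The ratio `c(q; x, y) / c(1; x, y)` tends to `q q⁻¹ = 1` as `y → 0`
(for `x ≠ 0`) and to `1` as `y → ∞`, while it stays bounded, tending to `q⁻¹` resp. `q`, as
`x → 0` resp. `x → ∞` (for `y ≠ 0`). So for `k ≠ ℓ` the summand, which depends on `s_ℓ` only
through one such bounded ratio, contributes nothing to either residue, and for `k = ℓ` all ratios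
tend to `1`, leaving the residues of `s_ℓ · c(Q_ℓ; s_ℓ, s_ℓ) = s_ℓ (1 - Q_ℓ)(1 - Q_ℓ⁻¹ / s_ℓ²)`.
-/

open scoped BigOperators

noncomputable section

/-- The function `F` of the variable `s_ℓ = z` (the other `s_i` held fixed):
`F(s) = Σ_{k=1}^N s_k ∏_{i=1}^N (1 - Q_i s_i/s_k)(1 - Q_i⁻¹/(s_i s_k))
          / ∏_{i≠k} (1 - s_i/s_k)(1 - 1/(s_i s_k))`. -/
def FresB (N : ℕ) (Q s : ℕ → ℂ) (ℓ : ℕ) (z : ℂ) : ℂ :=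
  ∑ k ∈ Finset.Icc 1 N,
    (if k = ℓ then z else s k) *
      ((∏ i ∈ Finset.Icc 1 N,
          (1 - Q i * (if i = ℓ then z else s i) / (if k = ℓ then z else s k))
            * (1 - (Q i)⁻¹ / ((if i = ℓ then z else s i) * (if k = ℓ then z else s k))))
        / ∏ i ∈ (Finset.Icc 1 N).erase k,
            (1 - (if i = ℓ then z else s i) / (if k = ℓ then z else s k))
              * (1 - 1 / ((if i = ℓ then z else s i) * (if k = ℓ then z else s k))))

open Filter Topology Bornology Finset Function

theorem Filter.Tendsto.finsetSum_of_tendsto_zero_of_ne {ι α M : Type*} [AddCommMonoid M]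
    [TopologicalSpace M] [ContinuousAdd M] {l : Filter α} {S : Finset ι} {f : ι → α → M}
    {i : ι} {L : M} (hi : i ∈ S) (hf : Tendsto (f i) l (𝓝 L))
    (h0 : ∀ j ∈ S, j ≠ i → Tendsto (f j) l (𝓝 0)) :
    Tendsto (fun a => ∑ j ∈ S, f j a) l (𝓝 L) := by
  classical
  have h : Tendsto (fun a => ∑ j ∈ S, f j a) l (𝓝 (∑ j ∈ S, if j = i then L else 0)) :=
    tendsto_finsetSum S fun j hj => by
      split_ifs with hji
      · exact hji ▸ hf
      · exact h0 j hj hji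
  rwa [sum_ite_eq' S i, if_pos hi] at h

section Limits

variable {𝕜 : Type*} [NormedField 𝕜]

theorem tendsto_one_sub_mul_nhds_zero (a : 𝕜) : Tendsto (fun z => 1 - a * z) (𝓝 0) (𝓝 1) :=
  (continuous_const.sub (continuous_const.mul continuous_id)).tendsto' 0 1 (by simp)

theorem tendsto_one_sub_div_div_one_sub_div_nhdsNE_zero (a : 𝕜) {c : 𝕜} (hc : c ≠ 0) :
    Tendsto (fun z => (1 - a / z) / (1 - c / z)) (𝓝[≠] 0) (𝓝 (a / c)) := by
  have hlim : Tendsto (fun z => (z - a) / (z - c)) (𝓝 0) (𝓝 ((0 - a) / (0 - c))) :=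
    (tendsto_id.sub_const a).div (tendsto_id.sub_const c) (by simpa using hc)
  rw [zero_sub, zero_sub, neg_div_neg_eq] at hlim
  refine (hlim.mono_left nhdsWithin_le_nhds).congr' ?_
  filter_upwards [self_mem_nhdsWithin] with z hz
  rw [one_sub_div hz, one_sub_div hz, div_div_div_cancel_right₀ hz]

theorem tendsto_one_sub_mul_div_one_sub_mul_cobounded (a : 𝕜) {c : 𝕜} (hc : c ≠ 0) :
    Tendsto (fun z => (1 - a * z) / (1 - c * z)) (cobounded 𝕜) (𝓝 (a / c)) := by
  simpa [Function.comp_def, div_inv_eq_mul] using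
    (tendsto_one_sub_div_div_one_sub_div_nhdsNE_zero a hc).comp tendsto_inv₀_cobounded'

theorem tendsto_one_sub_div_cobounded (a : 𝕜) :
    Tendsto (fun z => 1 - a / z) (cobounded 𝕜) (𝓝 1) := by
  simpa [div_eq_mul_inv] using
    (tendsto_const_nhds (x := (1 : 𝕜))).sub
      ((tendsto_const_nhds (x := a)).mul tendsto_inv₀_cobounded)

end Limits

section Algebra

variable {K : Type*} [Field K]

def crossFactor (q x y : K) : K := (1 - q * x / y) * (1 - q⁻¹ / (x * y))

theorem crossFactor_div_crossFactor_one_eq_mul (q x y : K) :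
    crossFactor q x y / crossFactor 1 x y =
      (1 - q * x / y) / (1 - x / y) * ((1 - q⁻¹ / x / y) / (1 - 1 / x / y)) := by
  simp only [crossFactor, one_mul, inv_one, div_mul_eq_div_div]
  ring

theorem crossFactor_div_crossFactor_one_eq_mul' (q x y : K) :
    crossFactor q x y / crossFactor 1 x y =
      (1 - q / y * x) / (1 - 1 / y * x) * ((1 - q⁻¹ / y / x) / (1 - 1 / y / x)) := by
  rw [crossFactor_div_crossFactor_one_eq_mul, div_mul_eq_mul_div q y x, one_div_mul_eq_div y x,
    div_right_comm q⁻¹ x y, div_right_comm 1 x y]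

variable {ι : Type*} [DecidableEq ι] (S : Finset ι) (Q : ι → K)

def fresTerm (t : ι → K) (k : ι) : K :=
  t k * ((∏ i ∈ S, crossFactor (Q i) (t i) (t k)) / ∏ i ∈ S.erase k, crossFactor 1 (t i) (t k))

theorem fresTerm_eq_mul_prod {t : ι → K} {k : ι} (hk : k ∈ S) :
    fresTerm S Q t k = t k * crossFactor (Q k) (t k) (t k) *
      ∏ i ∈ S.erase k, crossFactor (Q i) (t i) (t k) / crossFactor 1 (t i) (t k) := by
  rw [fresTerm, ← mul_prod_erase S _ hk, prod_div_distrib]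
  ring

variable {S Q} {s : ι → K} {ℓ : ι}

theorem fresTerm_update_self (hℓ : ℓ ∈ S) (z : K) :
    fresTerm S Q (update s ℓ z) ℓ = z * crossFactor (Q ℓ) z z *
      ∏ i ∈ S.erase ℓ, crossFactor (Q i) (s i) z / crossFactor 1 (s i) z := by
  rw [fresTerm_eq_mul_prod S Q hℓ, update_self]
  congr 1
  exact prod_congr rfl fun i hi => by rw [update_of_ne (ne_of_mem_erase hi)]

theorem exists_fresTerm_update_of_ne_eq_mul {k : ι} (hk : k ∈ S) (hℓ : ℓ ∈ S) (hkℓ : k ≠ ℓ) :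
    ∃ c : K, ∀ z, fresTerm S Q (update s ℓ z) k =
      c * (crossFactor (Q ℓ) z (s k) / crossFactor 1 z (s k)) := by
  refine ⟨s k * crossFactor (Q k) (s k) (s k) *
    ∏ i ∈ (S.erase k).erase ℓ, crossFactor (Q i) (s i) (s k) / crossFactor 1 (s i) (s k),
    fun z => ?_⟩
  rw [fresTerm_eq_mul_prod S Q hk, ← mul_prod_erase _ _ (mem_erase.2 ⟨hkℓ.symm, hℓ⟩),
    update_self, update_of_ne hkℓ]
  rw [prod_congr rfl fun i hi => by rw [update_of_ne (ne_of_mem_erase hi)]]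
  ring

end Algebra

section ResidueLimits

variable {𝕜 : Type*} [NormedField 𝕜]

theorem tendsto_crossFactor_div_crossFactor_one_nhdsNE_zero_right {q x : 𝕜} (hq : q ≠ 0)
    (hx : x ≠ 0) :
    Tendsto (fun y => crossFactor q x y / crossFactor 1 x y) (𝓝[≠] 0) (𝓝 1) := by
  have h := (tendsto_one_sub_div_div_one_sub_div_nhdsNE_zero (q * x) hx).mul
    (tendsto_one_sub_div_div_one_sub_div_nhdsNE_zero (q⁻¹ / x) (one_div_ne_zero hx))
  rw [show q * x / x * (q⁻¹ / x / (1 / x)) = 1 by field_simp] at h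
  exact h.congr fun y => (crossFactor_div_crossFactor_one_eq_mul q x y).symm

theorem tendsto_crossFactor_div_crossFactor_one_cobounded_right (q x : 𝕜) :
    Tendsto (fun y => crossFactor q x y / crossFactor 1 x y) (cobounded 𝕜) (𝓝 1) := by
  have h := ((tendsto_one_sub_div_cobounded (q * x)).div (tendsto_one_sub_div_cobounded x)
    one_ne_zero).mul ((tendsto_one_sub_div_cobounded (q⁻¹ / x)).div
      (tendsto_one_sub_div_cobounded (1 / x)) one_ne_zero)
  rw [div_one, mul_one] at h
  exact h.congr fun y => (crossFactor_div_crossFactor_one_eq_mul q x y).symm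

theorem tendsto_crossFactor_div_crossFactor_one_nhdsNE_zero_left (q : 𝕜) {y : 𝕜} (hy : y ≠ 0) :
    Tendsto (fun x => crossFactor q x y / crossFactor 1 x y) (𝓝[≠] 0) (𝓝 q⁻¹) := by
  have h := (((tendsto_one_sub_mul_nhds_zero (q / y)).div (tendsto_one_sub_mul_nhds_zero (1 / y))
    one_ne_zero).mono_left nhdsWithin_le_nhds).mul
      (tendsto_one_sub_div_div_one_sub_div_nhdsNE_zero (q⁻¹ / y) (one_div_ne_zero hy))
  rw [show 1 / 1 * (q⁻¹ / y / (1 / y)) = q⁻¹ by field_simp] at h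
  exact h.congr fun x => (crossFactor_div_crossFactor_one_eq_mul' q x y).symm

theorem tendsto_crossFactor_div_crossFactor_one_cobounded_left (q : 𝕜) {y : 𝕜} (hy : y ≠ 0) :
    Tendsto (fun x => crossFactor q x y / crossFactor 1 x y) (cobounded 𝕜) (𝓝 q) := by
  have h := (tendsto_one_sub_mul_div_one_sub_mul_cobounded (q / y) (one_div_ne_zero hy)).mul
    ((tendsto_one_sub_div_cobounded (q⁻¹ / y)).div (tendsto_one_sub_div_cobounded (1 / y))
      one_ne_zero)
  rw [show q / y / (1 / y) * (1 / 1) = q by field_simp] at h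
  exact h.congr fun x => (crossFactor_div_crossFactor_one_eq_mul' q x y).symm

theorem tendsto_mul_mul_crossFactor_self_nhdsNE_zero {q : 𝕜} (hq : q ≠ 0) :
    Tendsto (fun z => z * (z * crossFactor q z z)) (𝓝[≠] 0) (𝓝 (1 - q⁻¹)) := by
  have h : Tendsto (fun z => (1 - q) * (z * z - q⁻¹)) (𝓝 0) (𝓝 (1 - q⁻¹)) :=
    (by fun_prop : Continuous fun z : 𝕜 => (1 - q) * (z * z - q⁻¹)).tendsto' 0 _
      (by field_simp; ring)
  refine (h.mono_left nhdsWithin_le_nhds).congr' ?_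
  filter_upwards [self_mem_nhdsWithin] with z (hz : z ≠ 0)
  simp only [crossFactor]
  field_simp

theorem tendsto_crossFactor_self_cobounded (q : 𝕜) :
    Tendsto (fun z => crossFactor q z z) (cobounded 𝕜) (𝓝 (1 - q)) := by
  have h : Tendsto (fun z => (1 - q) * (1 - q⁻¹ * z⁻¹ * z⁻¹)) (cobounded 𝕜) (𝓝 (1 - q)) := by
    simpa [Function.comp_def] using
      ((by fun_prop : Continuous fun w : 𝕜 => (1 - q) * (1 - q⁻¹ * w * w)).tendsto 0).comp
        tendsto_inv₀_cobounded
  refine h.congr' ?_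
  filter_upwards [eventually_ne_cobounded 0] with z hz
  simp only [crossFactor]
  field_simp

variable {ι : Type*} [DecidableEq ι] {S : Finset ι} {Q s : ι → 𝕜} {ℓ : ι}

theorem tendsto_mul_fresTerm_update_self_nhdsNE_zero (hℓ : ℓ ∈ S) (hQ : ∀ i ∈ S, Q i ≠ 0)
    (hs : ∀ i ∈ S, i ≠ ℓ → s i ≠ 0) :
    Tendsto (fun z => z * fresTerm S Q (update s ℓ z) ℓ) (𝓝[≠] 0) (𝓝 (1 - (Q ℓ)⁻¹)) := by
  have h := (tendsto_mul_mul_crossFactor_self_nhdsNE_zero (hQ ℓ hℓ)).mul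
    (tendsto_finsetProd (S.erase ℓ) fun i hi =>
      tendsto_crossFactor_div_crossFactor_one_nhdsNE_zero_right (hQ i (mem_of_mem_erase hi))
        (hs i (mem_of_mem_erase hi) (ne_of_mem_erase hi)))
  rw [prod_const_one, mul_one] at h
  refine h.congr fun z => ?_
  rw [fresTerm_update_self hℓ]
  ring

theorem tendsto_fresTerm_update_self_div_cobounded (hℓ : ℓ ∈ S) :
    Tendsto (fun z => fresTerm S Q (update s ℓ z) ℓ / z) (cobounded 𝕜) (𝓝 (1 - Q ℓ)) := by
  have h := (tendsto_crossFactor_self_cobounded (Q ℓ)).mul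
    (tendsto_finsetProd (S.erase ℓ) fun i _ =>
      tendsto_crossFactor_div_crossFactor_one_cobounded_right (Q i) (s i))
  rw [prod_const_one, mul_one] at h
  refine h.congr' ?_
  filter_upwards [eventually_ne_cobounded 0] with z hz
  rw [fresTerm_update_self hℓ, mul_assoc, mul_div_cancel_left₀ _ hz]

theorem tendsto_mul_fresTerm_update_of_ne_nhdsNE_zero {k : ι} (hk : k ∈ S) (hℓ : ℓ ∈ S)
    (hkℓ : k ≠ ℓ) (hsk : s k ≠ 0) :
    Tendsto (fun z => z * fresTerm S Q (update s ℓ z) k) (𝓝[≠] 0) (𝓝 0) := by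
  obtain ⟨c, hc⟩ := exists_fresTerm_update_of_ne_eq_mul (Q := Q) hk hℓ hkℓ
  have h := ((tendsto_id.mono_left nhdsWithin_le_nhds).mul
    (tendsto_crossFactor_div_crossFactor_one_nhdsNE_zero_left (Q ℓ) hsk)).const_mul c
  rw [zero_mul, mul_zero] at h
  refine h.congr fun z => ?_
  rw [hc, id, mul_left_comm]

theorem tendsto_fresTerm_update_of_ne_div_cobounded {k : ι} (hk : k ∈ S) (hℓ : ℓ ∈ S)
    (hkℓ : k ≠ ℓ) (hsk : s k ≠ 0) :
    Tendsto (fun z => fresTerm S Q (update s ℓ z) k / z) (cobounded 𝕜) (𝓝 0) := by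
  obtain ⟨c, hc⟩ := exists_fresTerm_update_of_ne_eq_mul (Q := Q) hk hℓ hkℓ
  have h := ((tendsto_crossFactor_div_crossFactor_one_cobounded_left (Q ℓ) hsk).mul
    tendsto_inv₀_cobounded).const_mul c
  rw [mul_zero, mul_zero] at h
  refine h.congr fun z => ?_
  rw [hc, mul_div_assoc, div_eq_mul_inv _ z]

end ResidueLimits

theorem FresB_eq_sum_fresTerm (N : ℕ) (Q s : ℕ → ℂ) (ℓ : ℕ) (z : ℂ) :
    FresB N Q s ℓ z = ∑ k ∈ Icc 1 N, fresTerm (Icc 1 N) Q (update s ℓ z) k := by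
  simp only [FresB, fresTerm, crossFactor, update_apply, one_mul, inv_one]

theorem residues_at_zero_and_infty_general (N : ℕ) (Q s : ℕ → ℂ) (ℓ : ℕ)
    (hℓ : ℓ ∈ Finset.Icc 1 N)
    (hQ : ∀ i ∈ Finset.Icc 1 N, Q i ≠ 0)
    (hs0 : ∀ i ∈ Finset.Icc 1 N, i ≠ ℓ → s i ≠ 0) :
    Filter.Tendsto (fun z : ℂ => z * FresB N Q s ℓ z)
      (nhdsWithin 0 {0}ᶜ) (nhds (1 - (Q ℓ)⁻¹))
    ∧ Filter.Tendsto (fun z : ℂ => FresB N Q s ℓ z / z)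
      (Bornology.cobounded ℂ) (nhds (1 - Q ℓ)) := by
  simp only [FresB_eq_sum_fresTerm, mul_sum, sum_div]
  constructor
  · exact (tendsto_mul_fresTerm_update_self_nhdsNE_zero hℓ hQ hs0).finsetSum_of_tendsto_zero_of_ne
      hℓ fun k hk hkℓ => tendsto_mul_fresTerm_update_of_ne_nhdsNE_zero hk hℓ hkℓ (hs0 k hk hkℓ)
  · exact (tendsto_fresTerm_update_self_div_cobounded hℓ).finsetSum_of_tendsto_zero_of_ne
      hℓ fun k hk hkℓ => tendsto_fresTerm_update_of_ne_div_cobounded hk hℓ hkℓ (hs0 k hk hkℓ)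

/-- residues at `0` and `∞` in the proof of Proposition 3.2.  As a
function of `s_ℓ`, the residues of `F` at `s_ℓ = 0` and `s_ℓ = ∞` are
`lim_{s_ℓ → 0} s_ℓ F(s) = 1 - Q_ℓ⁻¹` and `lim_{s_ℓ → ∞} F(s)/s_ℓ = 1 - Q_ℓ`. -/
theorem residues_at_zero_and_infty (N : ℕ) (Q s : ℕ → ℂ) (ℓ : ℕ)
    (hℓ : ℓ ∈ Finset.Icc 1 N)
    (hQ : ∀ i ∈ Finset.Icc 1 N, Q i ≠ 0)
    (hs0 : ∀ i ∈ Finset.Icc 1 N, i ≠ ℓ → s i ≠ 0)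
    (hd : ∀ i ∈ Finset.Icc 1 N, ∀ j ∈ Finset.Icc 1 N,
      i ≠ ℓ → j ≠ ℓ → i ≠ j → s i ≠ s j)
    (hp : ∀ i ∈ Finset.Icc 1 N, ∀ j ∈ Finset.Icc 1 N,
      i ≠ ℓ → j ≠ ℓ → i ≠ j → s i * s j ≠ 1) :
    Filter.Tendsto (fun z : ℂ => z * FresB N Q s ℓ z)
      (nhdsWithin 0 {0}ᶜ) (nhds (1 - (Q ℓ)⁻¹))
    ∧ Filter.Tendsto (fun z : ℂ => FresB N Q s ℓ z / z)
      (Bornology.cobounded ℂ) (nhds (1 - Q ℓ)) :=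
  residues_at_zero_and_infty_general N Q s ℓ hℓ hQ hs0
end
end

section
/- Let Q₁, …, Q_N ∈ ℂ be nonzero and let s₁, …, s_N ∈ ℂ be nonzero. Define F(s) := Σ_{k=1}^N s_k · [∏_{i=1}^N (1 − Q_i s_i/s_k)(1 − Q_i^{−1}/(s_i s_k))] / [∏_{i≠k} (1 − s_i/s_k)(1 − 1/(s_i s_k))]. Then for any indices ℓ ≠ ℓ′, the residues of F in the variable s_ℓ at the points s_ℓ = s_{ℓ′} and s_ℓ = 1/s_{ℓ′} vanish: lim_{s_ℓ → s_{ℓ′}} F(s)·(s_ℓ − s_{ℓ′}) = 0 and lim_{s_ℓ → 1/s_{ℓ′}} F(s)·(s_ℓ − 1/s_{ℓ′}) = 0, the other variables being held fixed at generic values (nonzero, pairwise distinct, with s_i s_j ≠ 1 for the fixed indices, and with the limiting point s_{ℓ′}^{±1} distinct from all s_i^{±1}, i ≠ ℓ, ℓ′). Consequently, as a rational function of s_ℓ, F has no poles away from s_ℓ = 0 and s_ℓ = ∞. -/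
/-!
Write `x` for `s` with `s_ℓ` replaced by the variable `z`. Every factor of `F` has the form
`w(c, y) = (1 - c/y)(1 - c⁻¹/y) = (y - c)(y - c⁻¹)/y²`, which is unchanged under `c ↦ c⁻¹` and
satisfies `w(c, y⁻¹) = y² w(c, y)` and `w(y, c) = -(y/c) w(c, y)`. Near `z = a ∈ {s_ℓ', s_ℓ'⁻¹}`
only the summands `k = ℓ, ℓ'` are singular, both through the simple zero of `w(s_ℓ', z)`, so that
`F = R + Φ / w(s_ℓ', z)` with `R` holomorphic at `a`. At `z = s_ℓ'` the two terms of `Φ` cancel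
because `x_ℓ = x_ℓ'`; at `z = s_ℓ'⁻¹` they cancel by the inversion rule, the `N` numerator factors
and the `N - 2` remaining denominator factors contributing powers of `s_ℓ'²` that differ by exactly
`s_ℓ'⁴`. Hence `F = R + G / (z - a)` with `G` holomorphic at `a` and `G(a) = 0`, so `F` has a finite
limit at `a` and the residue vanishes.
-/

open scoped BigOperators

noncomputable section

open Filter Topology Finset Function

section RemovableSingularity

variable {𝕜 : Type*} [NontriviallyNormedField 𝕜] {F R G : 𝕜 → 𝕜} {a L : 𝕜}

theorem tendsto_nhdsNE_of_eventuallyEq_add_div_sub (hR : ContinuousAt R a)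
    (hG : DifferentiableAt 𝕜 G a) (hGa : G a = 0)
    (hF : ∀ᶠ z in 𝓝 a, F z = R z + G z / (z - a)) :
    Tendsto F (𝓝[≠] a) (𝓝 (R a + deriv G a)) := by
  have hslope := hasDerivAt_iff_tendsto_slope.1 hG.hasDerivAt
  refine ((hR.mono_left nhdsWithin_le_nhds).add hslope).congr' ?_
  filter_upwards [nhdsWithin_le_nhds hF] with z hz
  rw [hz, slope_def_field, hGa, sub_zero]

theorem tendsto_mul_sub_nhdsNE_zero (h : Tendsto F (𝓝[≠] a) (𝓝 L)) :
    Tendsto (fun z => F z * (z - a)) (𝓝[≠] a) (𝓝 0) := by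
  have hsub : Tendsto (fun z => z - a) (𝓝[≠] a) (𝓝 0) :=
    tendsto_sub_nhds_zero_iff.2 nhdsWithin_le_nhds
  simpa using h.mul hsub

end RemovableSingularity

namespace FresB

variable {ι : Type*}

/-- `w(c, y)` of the header. -/
def pairFactor (c y : ℂ) : ℂ := (1 - c / y) * (1 - c⁻¹ / y)

section PairFactor

variable {c y : ℂ}

theorem pairFactor_inv_left (c y : ℂ) : pairFactor c⁻¹ y = pairFactor c y := by
  rw [pairFactor, pairFactor, inv_inv, mul_comm]

theorem pairFactor_of_eq_or_eq_inv {b : ℂ} (h : b = c ∨ b = c⁻¹) (y : ℂ) :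
    pairFactor b y = pairFactor c y := by
  rcases h with rfl | rfl
  exacts [rfl, pairFactor_inv_left c y]

theorem pairFactor_eq (hy : y ≠ 0) : pairFactor c y = (y - c) * (y - c⁻¹) / y ^ 2 := by
  rw [pairFactor]
  field_simp

theorem pairFactor_swap (hc : c ≠ 0) (hy : y ≠ 0) :
    pairFactor y c = -(y / c) * pairFactor c y := by
  rw [pairFactor, pairFactor]
  field_simp
  ring

theorem pairFactor_inv_right (hc : c ≠ 0) (hy : y ≠ 0) :
    pairFactor c y⁻¹ = y ^ 2 * pairFactor c y := by
  rw [pairFactor, pairFactor]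
  field_simp
  ring

theorem pairFactor_ne_zero (hy : y ≠ 0) (h : y ≠ c) (h' : y ≠ c⁻¹) : pairFactor c y ≠ 0 := by
  rw [pairFactor_eq hy]
  exact div_ne_zero (mul_ne_zero (sub_ne_zero.2 h) (sub_ne_zero.2 h')) (pow_ne_zero 2 hy)

theorem prod_pairFactor_inv_right {S : Finset ι} {c : ι → ℂ}
    (hc : ∀ i ∈ S, c i ≠ 0) (hy : y ≠ 0) :
    ∏ i ∈ S, pairFactor (c i) y⁻¹ = (y ^ 2) ^ #S * ∏ i ∈ S, pairFactor (c i) y := by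
  rw [← prod_const, ← prod_mul_distrib]
  exact prod_congr rfl fun i hi => pairFactor_inv_right (hc i hi) hy

theorem differentiableAt_pairFactor {c y : ℂ → ℂ} {a : ℂ} (hc : DifferentiableAt ℂ c a)
    (hy : DifferentiableAt ℂ y a) (hc0 : c a ≠ 0) (hy0 : y a ≠ 0) :
    DifferentiableAt ℂ (fun z => pairFactor (c z) (y z)) a :=
  ((differentiableAt_const 1).sub (hc.div hy hy0)).mul
    ((differentiableAt_const 1).sub ((hc.inv hc0).div hy hy0))

theorem differentiableAt_prod_pairFactor {S : Finset ι} {c : ι → ℂ → ℂ}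
    {y : ℂ → ℂ} {a : ℂ} (hc : ∀ i ∈ S, DifferentiableAt ℂ (c i) a)
    (hy : DifferentiableAt ℂ y a) (hc0 : ∀ i ∈ S, c i a ≠ 0) (hy0 : y a ≠ 0) :
    DifferentiableAt ℂ (fun z => ∏ i ∈ S, pairFactor (c i z) (y z)) a :=
  DifferentiableAt.fun_finsetProd fun i hi =>
    differentiableAt_pairFactor (hc i hi) hy (hc0 i hi) hy0

end PairFactor

def IsGeneric (T : Finset ι) (s : ι → ℂ) : Prop :=
  ∀ i ∈ T, ∀ j ∈ T, s i ≠ 0 ∧ s i * s j ≠ 1 ∧ (i ≠ j → s i ≠ s j)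

theorem IsGeneric.pairFactor_ne_zero {T : Finset ι} {s : ι → ℂ}
    (hs : IsGeneric T s) {i j : ι} (hi : i ∈ T) (hj : j ∈ T) (hij : i ≠ j) {y : ℂ}
    (hy : y = s j ∨ y = (s j)⁻¹) : pairFactor (s i) y ≠ 0 := by
  obtain ⟨hi0, hij1, hne⟩ := hs i hi j hj
  obtain ⟨hj0, hji1, -⟩ := hs j hj i hi
  have hinv : ∀ {u v : ℂ}, u ≠ 0 → u * v ≠ 1 → v ≠ u⁻¹ := fun hu huv h =>
    huv (by rw [h, mul_inv_cancel₀ hu])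
  rcases hy with rfl | rfl
  · exact FresB.pairFactor_ne_zero hj0 (hne hij).symm (hinv hi0 hij1)
  · exact FresB.pairFactor_ne_zero (inv_ne_zero hj0) (hinv hj0 hji1).symm
      fun h => hne hij (inv_injective h).symm

def numer (S : Finset ι) (Q x : ι → ℂ) (k : ι) : ℂ := ∏ i ∈ S, pairFactor (Q i * x i) (x k)

theorem differentiableAt_numer {S : Finset ι} {Q : ι → ℂ} {x : ℂ → ι → ℂ} {a : ℂ} {k : ι}
    (hx : ∀ i, DifferentiableAt ℂ (fun z => x z i) a) (hx0 : ∀ i ∈ S, x a i ≠ 0)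
    (hQ : ∀ i ∈ S, Q i ≠ 0) (hk : x a k ≠ 0) :
    DifferentiableAt ℂ (fun z => numer S Q (x z) k) a :=
  differentiableAt_prod_pairFactor (fun i _ => (hx i).const_mul (Q i)) (hx k)
    (fun i hi => mul_ne_zero (hQ i hi) (hx0 i hi)) hk

variable [DecidableEq ι]

def denom (S : Finset ι) (x : ι → ℂ) (k : ι) : ℂ := ∏ i ∈ S.erase k, pairFactor (x i) (x k)

def summand (S : Finset ι) (Q x : ι → ℂ) (k : ι) : ℂ := x k * (numer S Q x k / denom S x k)

theorem eq_sum_summand (N : ℕ) (Q s : ℕ → ℂ) (ℓ : ℕ) (z : ℂ) :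
    FresB N Q s ℓ z = ∑ k ∈ Icc 1 N, summand (Icc 1 N) Q (update s ℓ z) k := by
  refine sum_congr rfl fun k _ => ?_
  simp only [summand, numer, denom, pairFactor, update_apply]
  congr 2 <;> refine prod_congr rfl fun i _ => ?_ <;> ring

theorem differentiableAt_update_apply (s : ι → ℂ) (ℓ i : ι) (a : ℂ) :
    DifferentiableAt ℂ (fun z => update s ℓ z i) a := by
  rcases eq_or_ne i ℓ with rfl | h
  · simp only [update_self]
    exact differentiableAt_id
  · simp only [update_of_ne h]
    exact differentiableAt_const (s i)

theorem differentiableAt_summand {S : Finset ι} {Q : ι → ℂ} {x : ℂ → ι → ℂ} {a : ℂ} {k : ι}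
    (hx : ∀ i, DifferentiableAt ℂ (fun z => x z i) a) (hx0 : ∀ i ∈ S, x a i ≠ 0)
    (hQ : ∀ i ∈ S, Q i ≠ 0) (hk : k ∈ S) (hden : denom S (x a) k ≠ 0) :
    DifferentiableAt ℂ (fun z => summand S Q (x z) k) a := by
  have hdenom : DifferentiableAt ℂ (fun z => denom S (x z) k) a :=
    differentiableAt_prod_pairFactor (fun i _ => hx i) (hx k)
      (fun i hi => hx0 i (mem_of_mem_erase hi)) (hx0 k hk)
  exact (hx k).mul ((differentiableAt_numer hx hx0 hQ (hx0 k hk)).div hdenom hden)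

section Residues

variable {S : Finset ι} {Q s : ι → ℂ} {ℓ ℓ' : ι} {a : ℂ}

/-- The numerator `Φ` of the singular part `Φ / w(s_ℓ', z)` of `F`. -/
def singularNumer (S : Finset ι) (Q s : ι → ℂ) (ℓ ℓ' : ι) (z : ℂ) : ℂ :=
  z * numer S Q (update s ℓ z) ℓ / ∏ i ∈ (S.erase ℓ).erase ℓ', pairFactor (s i) z -
    s ℓ' ^ 2 * numer S Q (update s ℓ z) ℓ' /
      (z * ∏ i ∈ (S.erase ℓ).erase ℓ', pairFactor (s i) (s ℓ'))

theorem sum_summand_update (hℓ : ℓ ∈ S) (hℓ' : ℓ' ∈ S) (hne : ℓ ≠ ℓ') (hb : s ℓ' ≠ 0)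
    {z : ℂ} (hz : z ≠ 0) :
    ∑ k ∈ S, summand S Q (update s ℓ z) k =
      ∑ k ∈ (S.erase ℓ).erase ℓ', summand S Q (update s ℓ z) k +
        singularNumer S Q s ℓ ℓ' z / pairFactor (s ℓ') z := by
  have hℓ'ℓ : ℓ' ∈ S.erase ℓ := mem_erase.2 ⟨hne.symm, hℓ'⟩
  have hℓℓ' : ℓ ∈ S.erase ℓ' := mem_erase.2 ⟨hne, hℓ⟩
  have hrest : ∀ y, ∀ i ∈ (S.erase ℓ).erase ℓ',
      pairFactor (update s ℓ z i) y = pairFactor (s i) y := fun y i hi => by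
    rw [update_of_ne (ne_of_mem_erase (mem_of_mem_erase hi))]
  have hden : denom S (update s ℓ z) ℓ =
      pairFactor (s ℓ') z * ∏ i ∈ (S.erase ℓ).erase ℓ', pairFactor (s i) z := by
    rw [denom, ← mul_prod_erase _ _ hℓ'ℓ, update_self, update_of_ne hne.symm,
      prod_congr rfl (hrest z)]
  have hden' : denom S (update s ℓ z) ℓ' =
      pairFactor z (s ℓ') * ∏ i ∈ (S.erase ℓ).erase ℓ', pairFactor (s i) (s ℓ') := by
    rw [denom, ← mul_prod_erase _ _ hℓℓ', erase_right_comm, update_self,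
      update_of_ne hne.symm, prod_congr rfl (hrest (s ℓ'))]
  rw [← add_sum_erase _ _ hℓ, ← add_sum_erase _ _ hℓ'ℓ, summand, summand, hden, hden',
    update_self, update_of_ne hne.symm, pairFactor_swap hb hz, singularNumer]
  simp only [div_eq_mul_inv, mul_inv, inv_inv, neg_mul, inv_neg]
  ring

theorem singularNumer_eq_zero (hℓ : ℓ ∈ S) (hℓ' : ℓ' ∈ S) (hne : ℓ ≠ ℓ')
    (hQ : ∀ i ∈ S, Q i ≠ 0) (hs : ∀ i ∈ S.erase ℓ, s i ≠ 0) (ha : a = s ℓ' ∨ a = (s ℓ')⁻¹) :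
    singularNumer S Q s ℓ ℓ' a = 0 := by
  have hℓ'ℓ : ℓ' ∈ S.erase ℓ := mem_erase.2 ⟨hne.symm, hℓ'⟩
  have hb : s ℓ' ≠ 0 := hs ℓ' hℓ'ℓ
  rcases ha with rfl | rfl
  · have hnumer : numer S Q (update s ℓ (s ℓ')) ℓ = numer S Q (update s ℓ (s ℓ')) ℓ' := by
      rw [numer, numer, update_self, update_of_ne hne.symm]
    rw [singularNumer, hnumer, sq, mul_assoc, mul_div_mul_left _ _ hb, sub_self]
  · have hnumer : numer S Q (update s ℓ (s ℓ')⁻¹) ℓ =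
        (s ℓ' ^ 2) ^ #S * numer S Q (update s ℓ (s ℓ')⁻¹) ℓ' := by
      rw [numer, numer, update_self, update_of_ne hne.symm]
      refine prod_pairFactor_inv_right (fun i hi => mul_ne_zero (hQ i hi) ?_) hb
      rcases eq_or_ne i ℓ with rfl | hiℓ
      · rw [update_self]
        exact inv_ne_zero hb
      · rw [update_of_ne hiℓ]
        exact hs i (mem_erase.2 ⟨hiℓ, hi⟩)
    have hrest := prod_pairFactor_inv_right (S := (S.erase ℓ).erase ℓ')
      (fun i hi => hs i (mem_of_mem_erase hi)) hb
    have hcard : #S = #((S.erase ℓ).erase ℓ') + 2 := by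
      have := card_erase_add_one hℓ
      have := card_erase_add_one hℓ'ℓ
      omega
    rw [singularNumer, hnumer, hrest, hcard, pow_add]
    field_simp
    ring

theorem denom_update_ne_zero (hs : IsGeneric (S.erase ℓ) s) (hℓ'ℓ : ℓ' ∈ S.erase ℓ)
    (ha : a = s ℓ' ∨ a = (s ℓ')⁻¹) {k : ι} (hk : k ∈ (S.erase ℓ).erase ℓ') :
    denom S (update s ℓ a) k ≠ 0 := by
  have hkℓ : k ∈ S.erase ℓ := mem_of_mem_erase hk
  refine prod_ne_zero_iff.2 fun i hi => ?_
  rw [update_of_ne (ne_of_mem_erase hkℓ)]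
  rcases eq_or_ne i ℓ with rfl | hiℓ
  · rw [update_self, pairFactor_of_eq_or_eq_inv ha]
    exact hs.pairFactor_ne_zero hℓ'ℓ hkℓ (ne_of_mem_erase hk).symm (Or.inl rfl)
  · rw [update_of_ne hiℓ]
    exact hs.pairFactor_ne_zero (mem_erase.2 ⟨hiℓ, mem_of_mem_erase hi⟩) hkℓ
      (ne_of_mem_erase hi) (Or.inl rfl)

theorem differentiableAt_singularNumer (hℓ : ℓ ∈ S) (hℓ' : ℓ' ∈ S) (hQ : ∀ i ∈ S, Q i ≠ 0)
    (hs : IsGeneric (S.erase ℓ) s) (hℓ'ℓ : ℓ' ∈ S.erase ℓ) (ha : a = s ℓ' ∨ a = (s ℓ')⁻¹)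
    (ha0 : a ≠ 0) (hx0 : ∀ i ∈ S, update s ℓ a i ≠ 0) :
    DifferentiableAt ℂ (singularNumer S Q s ℓ ℓ') a := by
  have hnumer : ∀ k ∈ S, DifferentiableAt ℂ (fun z => numer S Q (update s ℓ z) k) a :=
    fun k hk => differentiableAt_numer (differentiableAt_update_apply s ℓ · a) hx0 hQ (hx0 k hk)
  have hrest : ∀ y, (y = s ℓ' ∨ y = (s ℓ')⁻¹) →
      ∏ i ∈ (S.erase ℓ).erase ℓ', pairFactor (s i) y ≠ 0 := fun y hy =>
    prod_ne_zero_iff.2 fun i hi =>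
      hs.pairFactor_ne_zero (mem_of_mem_erase hi) hℓ'ℓ (ne_of_mem_erase hi) hy
  have hprod : DifferentiableAt ℂ
      (fun z => ∏ i ∈ (S.erase ℓ).erase ℓ', pairFactor (s i) z) a :=
    differentiableAt_prod_pairFactor (fun _ _ => differentiableAt_const _) differentiableAt_id
      (fun i hi => (hs i (mem_of_mem_erase hi) i (mem_of_mem_erase hi)).1) ha0
  exact ((differentiableAt_id.mul (hnumer ℓ hℓ)).div hprod (hrest a ha)).sub
    (((differentiableAt_const _).mul (hnumer ℓ' hℓ')).div
      (differentiableAt_id.mul (differentiableAt_const _)) (mul_ne_zero ha0 (hrest _ (.inl rfl))))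

theorem exists_tendsto_sum_summand (hℓ : ℓ ∈ S) (hℓ' : ℓ' ∈ S) (hne : ℓ ≠ ℓ')
    (hQ : ∀ i ∈ S, Q i ≠ 0) (hs : IsGeneric (S.erase ℓ) s) (ha : a = s ℓ' ∨ a = (s ℓ')⁻¹) :
    ∃ L, Tendsto (fun z => ∑ k ∈ S, summand S Q (update s ℓ z) k) (𝓝[≠] a) (𝓝 L) := by
  have hℓ'ℓ : ℓ' ∈ S.erase ℓ := mem_erase.2 ⟨hne.symm, hℓ'⟩
  have hs0 : ∀ i ∈ S.erase ℓ, s i ≠ 0 := fun i hi => (hs i hi i hi).1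
  have hb : s ℓ' ≠ 0 := hs0 ℓ' hℓ'ℓ
  have ha0 : a ≠ 0 := by rcases ha with rfl | rfl <;> simp [hb]
  have haa : a - a⁻¹ ≠ 0 := by
    have hbb : s ℓ' * s ℓ' ≠ 1 := (hs ℓ' hℓ'ℓ ℓ' hℓ'ℓ).2.1
    have haa : a * a ≠ 1 := by
      rcases ha with rfl | rfl
      exacts [hbb, by rw [← mul_inv, inv_ne_one]; exact hbb]
    refine sub_ne_zero.2 fun h => haa ?_
    nth_rewrite 2 [h]
    exact mul_inv_cancel₀ ha0
  have hx0 : ∀ i ∈ S, update s ℓ a i ≠ 0 := fun i hi => by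
    rcases eq_or_ne i ℓ with rfl | hiℓ
    · rwa [update_self]
    · rw [update_of_ne hiℓ]
      exact hs0 i (mem_erase.2 ⟨hiℓ, hi⟩)
  have hregular : ContinuousAt
      (fun z => ∑ k ∈ (S.erase ℓ).erase ℓ', summand S Q (update s ℓ z) k) a :=
    (DifferentiableAt.fun_sum (𝕜 := ℂ) fun k hk =>
      differentiableAt_summand (differentiableAt_update_apply s ℓ · a) hx0 hQ
        (mem_of_mem_erase (mem_of_mem_erase hk)) (denom_update_ne_zero hs hℓ'ℓ ha hk)).continuousAt
  refine ⟨_, tendsto_nhdsNE_of_eventuallyEq_add_div_sub hregular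
    (G := fun z => z ^ 2 * singularNumer S Q s ℓ ℓ' z / (z - a⁻¹)) ?_ ?_ ?_⟩
  · exact ((differentiableAt_id.pow 2).mul
      (differentiableAt_singularNumer hℓ hℓ' hQ hs hℓ'ℓ ha ha0 hx0)).div
      (differentiableAt_id.sub (differentiableAt_const _)) haa
  · simp only [singularNumer_eq_zero hℓ hℓ' hne hQ hs0 ha, mul_zero, zero_div]
  · filter_upwards [eventually_ne_nhds ha0] with z hz
    rw [sum_summand_update hℓ hℓ' hne hb hz, ← pairFactor_of_eq_or_eq_inv ha, pairFactor_eq hz,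
      div_div_eq_mul_div, div_div]
    ring

end Residues

end FresB

/-- vanishing of residues in the proof of Proposition 3.2.  For `ℓ ≠ ℓ'`
and generic fixed values of the `s_i` (`i ≠ ℓ`) — nonzero, pairwise distinct, with
`s_i s_j ≠ 1` — the residues of `F`, as a rational function of `s_ℓ`, at the points
`s_ℓ = s_{ℓ'}` and `s_ℓ = 1/s_{ℓ'}` vanish:
`lim_{s_ℓ → s_{ℓ'}} F·(s_ℓ - s_{ℓ'}) = 0` and `lim_{s_ℓ → 1/s_{ℓ'}} F·(s_ℓ - 1/s_{ℓ'}) = 0`.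
Consequently these singularities are removable: `F` tends to finite limits there, so it has
no poles away from `s_ℓ = 0` and `s_ℓ = ∞`. -/
theorem residues_vanish_typeB (N : ℕ) (Q s : ℕ → ℂ) (ℓ ℓ' : ℕ)
    (hℓ : ℓ ∈ Finset.Icc 1 N) (hℓ' : ℓ' ∈ Finset.Icc 1 N) (hne : ℓ ≠ ℓ')
    (hQ : ∀ i ∈ Finset.Icc 1 N, Q i ≠ 0)
    (hs0 : ∀ i ∈ Finset.Icc 1 N, i ≠ ℓ → s i ≠ 0)
    (hd : ∀ i ∈ Finset.Icc 1 N, ∀ j ∈ Finset.Icc 1 N,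
      i ≠ ℓ → j ≠ ℓ → i ≠ j → s i ≠ s j)
    (hp : ∀ i ∈ Finset.Icc 1 N, ∀ j ∈ Finset.Icc 1 N,
      i ≠ ℓ → j ≠ ℓ → s i * s j ≠ 1) :
    (Filter.Tendsto (fun z : ℂ => FresB N Q s ℓ z * (z - s ℓ'))
        (nhdsWithin (s ℓ') {s ℓ'}ᶜ) (nhds 0)
      ∧ Filter.Tendsto (fun z : ℂ => FresB N Q s ℓ z * (z - (s ℓ')⁻¹))
        (nhdsWithin ((s ℓ')⁻¹) {(s ℓ')⁻¹}ᶜ) (nhds 0))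
    ∧ ((∃ L : ℂ, Filter.Tendsto (fun z : ℂ => FresB N Q s ℓ z)
          (nhdsWithin (s ℓ') {s ℓ'}ᶜ) (nhds L))
      ∧ ∃ L' : ℂ, Filter.Tendsto (fun z : ℂ => FresB N Q s ℓ z)
          (nhdsWithin ((s ℓ')⁻¹) {(s ℓ')⁻¹}ᶜ) (nhds L')) := by
  have hs : FresB.IsGeneric ((Icc 1 N).erase ℓ) s := fun i hi j hj =>
    ⟨hs0 i (mem_of_mem_erase hi) (ne_of_mem_erase hi),
      hp i (mem_of_mem_erase hi) j (mem_of_mem_erase hj) (ne_of_mem_erase hi) (ne_of_mem_erase hj),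
      hd i (mem_of_mem_erase hi) j (mem_of_mem_erase hj) (ne_of_mem_erase hi) (ne_of_mem_erase hj)⟩
  have hlim : ∀ a, (a = s ℓ' ∨ a = (s ℓ')⁻¹) → ∃ L, Tendsto (FresB N Q s ℓ) (𝓝[≠] a) (𝓝 L) :=
    fun a ha => by
      simpa only [funext (FresB.eq_sum_summand N Q s ℓ)] using
        FresB.exists_tendsto_sum_summand hℓ hℓ' hne hQ hs ha
  obtain ⟨L, hL⟩ := hlim _ (.inl rfl)
  obtain ⟨L', hL'⟩ := hlim _ (.inr rfl)
  exact ⟨⟨tendsto_mul_sub_nhdsNE_zero hL, tendsto_mul_sub_nhdsNE_zero hL'⟩, ⟨L, hL⟩, ⟨L', hL'⟩⟩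
end
end
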